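/- arXiv:2509.17076 — 5 statements merged into one kernel-verified Lean document; each statement's English description precedes it below -/
import Mathlib

section
/- Under Assumption 1, if X(f,T,χᵢ,χ_f) is nonempty, then there exists m > 0 such that d_H(R(t₁), R(t₂)) ≤ m·|t₁ − t₂| for all t₁, t₂ ∈ [0,T]; in particular the en route reachable set map t ↦ R(t) is continuous on [0,T] with respect to the Hausdorff distance. -/
open MeasureTheory Metric Set

noncomputable section

abbrev En (n : ℕ) : Type := EuclideanSpace ℝ (Fin n)

/-- An admissible control on `[a, b]`: measurable with values in the restraint set `Ω`. -/
def IsAdmissible {m : ℕ} (Ω : Set (En m)) (a b : ℝ) (u : ℝ → En m) : Prop :=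
  Measurable u ∧ ∀ t ∈ Set.Icc a b, u t ∈ Ω

/-- A response of the system `χ' = g(χ, u)` from `x₀` on `[a, b]` for the control `u`. -/
def IsResponse {n m : ℕ} (g : En n → En m → En n) (a b : ℝ) (x₀ : En n)
    (χ : ℝ → En n) (u : ℝ → En m) : Prop :=
  ContinuousOn χ (Set.Icc a b) ∧
  ∀ t ∈ Set.Icc a b, χ t = x₀ + ∫ s in a..t, g (χ s) (u s)

/-- The reachable set `G(g, t, x₀)`. -/
def Reach {n m : ℕ} (Ω : Set (En m)) (g : En n → En m → En n) (t : ℝ) (x₀ : En n) :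
    Set (En n) :=
  {y | ∃ χ u, IsAdmissible Ω 0 t u ∧ IsResponse g 0 t x₀ χ u ∧ χ t = y}

/-- Assumption 1: uniform bound on responses on `[0, T]` and convex velocity sets. -/
def Assumption1 {n m : ℕ} (Ω : Set (En m)) (f : En n → En m → En n) (T : ℝ)
    (χi : En n) : Prop :=
  (∃ M > 0, ∀ χ u, IsAdmissible Ω 0 T u → IsResponse f 0 T χi χ u →
      ∀ t ∈ Set.Icc 0 T, ‖χ t‖ < M) ∧
  ∀ x : En n, Convex ℝ {v | ∃ u ∈ Ω, f x u = v}

/-- `X(f, T, χi, χf)`: the responses of `f` on `[0, T]` from `χi` ending at `χf`. -/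
def XSet {n m : ℕ} (Ω : Set (En m)) (f : En n → En m → En n) (T : ℝ)
    (χi χf : En n) : Set (ℝ → En n) :=
  {χ | ∃ u, IsAdmissible Ω 0 T u ∧ IsResponse f 0 T χi χ u ∧ χ T = χf}

/-- The en route reachable set `R(t)`. -/
def EnRoute {n m : ℕ} (Ω : Set (En m)) (f : En n → En m → En n) (T : ℝ)
    (χi χf : En n) (t : ℝ) : Set (En n) :=
  {x | ∃ χ ∈ XSet Ω f T χi χf, χ t = x}

/-- The en route reachable tube `B(f, T, χi, χf)`. -/
def Tube {n m : ℕ} (Ω : Set (En m)) (f : En n → En m → En n) (T : ℝ)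
    (χi χf : En n) : Set (En n) :=
  ⋃ t ∈ Set.Icc 0 T, EnRoute Ω f T χi χf t



private lemma key_lip {n m : ℕ} (T : ℝ) (hT : 0 < T) (χi : En n)
    (f : En n → En m → En n) (hf : ContDiff ℝ 1 (fun q : En n × En m => f q.1 q.2))
    (Ω : Set (En m)) (M K : ℝ)
    (hC : ∀ x ∈ closedBall (0:En n) M ×ˢ Ω, ‖f x.1 x.2‖ ≤ K)
    (χ : ℝ → En n) (u : ℝ → En m)
    (hu : IsAdmissible Ω 0 T u) (hχ : IsResponse f 0 T χi χ u)
    (hbd : ∀ t ∈ Set.Icc (0:ℝ) T, ‖χ t‖ < M)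
    (t₁ : ℝ) (ht₁ : t₁ ∈ Set.Icc (0:ℝ) T) (t₂ : ℝ) (ht₂ : t₂ ∈ Set.Icc (0:ℝ) T) :
    dist (χ t₁) (χ t₂) ≤ K * |t₁ - t₂| := by
  have hgb : ∀ s ∈ Set.Icc (0:ℝ) T, ‖f (χ s) (u s)‖ ≤ K := fun s hs =>
    hC (χ s, u s) ⟨mem_closedBall_zero_iff.2 (hbd s hs).le, hu.2 s hs⟩
  have hmeas : AEMeasurable (fun s => f (χ s) (u s)) (volume.restrict (Set.Icc (0:ℝ) T)) := by
    have h1 : AEMeasurable χ (volume.restrict (Set.Icc (0:ℝ) T)) :=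
      hχ.1.aemeasurable measurableSet_Icc
    have h2 : AEMeasurable (fun s => (χ s, u s)) (volume.restrict (Set.Icc (0:ℝ) T)) :=
      h1.prodMk hu.1.aemeasurable
    exact hf.continuous.measurable.comp_aemeasurable h2
  have hint : ∀ a b : ℝ, a ∈ Set.Icc (0:ℝ) T → b ∈ Set.Icc (0:ℝ) T →
      IntervalIntegrable (fun s => f (χ s) (u s)) volume a b := by
    intro a b ha hb
    rw [intervalIntegrable_iff]
    have hsub : Set.uIoc a b ⊆ Set.Icc (0:ℝ) T := fun s hs =>
      ⟨le_trans (le_min ha.1 hb.1) hs.1.le, le_trans hs.2 (max_le ha.2 hb.2)⟩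
    refine Integrable.mono' (g := fun _ => K) ?_ ?_ ?_
    · exact integrableOn_const measure_Ioc_lt_top.ne
    · exact (hmeas.mono_measure (Measure.restrict_mono hsub le_rfl)).aestronglyMeasurable
    · exact (ae_restrict_iff' measurableSet_uIoc).2 (ae_of_all _ fun s hs => hgb s (hsub hs))
  have h0 : (0:ℝ) ∈ Set.Icc (0:ℝ) T := ⟨le_refl _, hT.le⟩
  have hdiff : χ t₁ - χ t₂ = ∫ s in t₂..t₁, f (χ s) (u s) := by
    rw [hχ.2 t₁ ht₁, hχ.2 t₂ ht₂, add_sub_add_left_eq_sub]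
    exact intervalIntegral.integral_interval_sub_left (hint 0 t₁ h0 ht₁) (hint 0 t₂ h0 ht₂)
  rw [dist_eq_norm, hdiff]
  refine intervalIntegral.norm_integral_le_of_norm_le_const fun s hs => ?_
  exact hgb s ⟨le_trans (le_min ht₂.1 ht₁.1) hs.1.le, le_trans hs.2 (max_le ht₂.2 ht₁.2)⟩

set_option maxHeartbeats 1000000 in
/-- Under Assumption 1, if `X(f,T,χi,χf)` is nonempty then the
en route reachable set map `t ↦ R(t)` is Lipschitz on `[0,T]` for the Hausdorff
distance; in particular it is continuous there. -/
theorem enRoute_lipschitz_continuous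
    {n m : ℕ} (T : ℝ) (hT : 0 < T) (χi χf : En n)
    (f : En n → En m → En n) (hf : ContDiff ℝ 1 (fun q : En n × En m => f q.1 q.2))
    (Ω : Set (En m)) (hΩ : IsCompact Ω)
    (hA : Assumption1 Ω f T χi)
    (hX : (XSet Ω f T χi χf).Nonempty) :
    (∃ c > (0:ℝ), ∀ t₁ ∈ Set.Icc 0 T, ∀ t₂ ∈ Set.Icc 0 T,
      hausdorffDist (EnRoute Ω f T χi χf t₁) (EnRoute Ω f T χi χf t₂) ≤ c * |t₁ - t₂|) ∧
    (∀ t ∈ Set.Icc 0 T, ∀ ε > 0, ∃ δ > 0, ∀ s ∈ Set.Icc 0 T, |s - t| < δ →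
      hausdorffDist (EnRoute Ω f T χi χf s) (EnRoute Ω f T χi χf t) < ε) := by
  obtain ⟨⟨M, hM, hMbd⟩, -⟩ := hA
  have hcomp : IsCompact (closedBall (0:En n) M ×ˢ Ω) := (isCompact_closedBall _ _).prod hΩ
  obtain ⟨C, hC⟩ := hcomp.exists_bound_of_continuousOn hf.continuous.continuousOn
  have hK0 : (0:ℝ) < max C 1 := lt_of_lt_of_le one_pos (le_max_right _ _)
  have hC' : ∀ x ∈ closedBall (0:En n) M ×ˢ Ω, ‖f x.1 x.2‖ ≤ max C 1 := fun x hx =>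
    le_trans (hC x hx) (le_max_left _ _)
  obtain ⟨χ₀, hχ₀⟩ := hX
  have hH : ∀ t₁ ∈ Set.Icc (0:ℝ) T, ∀ t₂ ∈ Set.Icc (0:ℝ) T,
      hausdorffDist (EnRoute Ω f T χi χf t₁) (EnRoute Ω f T χi χf t₂)
        ≤ max C 1 * |t₁ - t₂| := by
    intro t₁ ht₁ t₂ ht₂
    refine hausdorffDist_le_of_mem_dist (by positivity) ?_ ?_
    · rintro x ⟨χ, ⟨u, hu, hr, hTf⟩, rfl⟩
      exact ⟨χ t₂, ⟨χ, ⟨u, hu, hr, hTf⟩, rfl⟩,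
        key_lip T hT χi f hf Ω M _ hC' χ u hu hr (hMbd χ u hu hr) t₁ ht₁ t₂ ht₂⟩
    · rintro x ⟨χ, ⟨u, hu, hr, hTf⟩, rfl⟩
      refine ⟨χ t₁, ⟨χ, ⟨u, hu, hr, hTf⟩, rfl⟩, ?_⟩
      rw [abs_sub_comm]
      exact key_lip T hT χi f hf Ω M _ hC' χ u hu hr (hMbd χ u hu hr) t₂ ht₂ t₁ ht₁
  refine ⟨⟨max C 1, hK0, hH⟩, ?_⟩
  intro t ht ε hε
  refine ⟨ε / max C 1, by positivity, fun s hs hd => ?_⟩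
  calc hausdorffDist (EnRoute Ω f T χi χf s) (EnRoute Ω f T χi χf t)
      ≤ max C 1 * |s - t| := hH s hs t ht
    _ < max C 1 * (ε / max C 1) := mul_lt_mul_of_pos_left hd hK0
    _ = ε := by field_simp
end
end

section
/- Let S and A be maps from a compact interval [a,b] to the nonempty compact subsets of ℝⁿ, both continuous with respect to the Hausdorff distance. Let x : [a,b] → ℝⁿ be continuous with x(a) ∈ int(S(a)) and x(b) ∉ int(S(b)). If bd(S(t)) ⊆ A(t) for all t ∈ [a,b], then there exists t' ∈ [a,b] such that x(t') ∈ A(t'). -/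
open Metric Set TopologicalSpace

/-!
If the curve never met `A`, its distance to `A(t)` would have a positive minimum `δ` on `[a,b]`.
Since `bd S(t) ⊆ A(t)`, the ball of radius `δ` around `x(t)` misses `bd S(t)`; being connected,
it lies outside `S(t)` as soon as its centre does. So `t ↦ d(x(t), S(t))`, which is continuous,
takes no value in `(0, δ)`, yet it vanishes at `a` and is at least `δ` at `b`.
-/

lemma IsPreconnected.subset_compl_closure_of_disjoint_frontier {X : Type*} [TopologicalSpace X]
    {s C : Set X} {p : X} (hs : IsPreconnected s) (hsC : Disjoint s (frontier C)) (hp : p ∈ s)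
    (hpC : p ∉ interior C) : s ⊆ (closure C)ᶜ := by
  have hcover : s ⊆ interior C ∪ (closure C)ᶜ := fun y hy => by
    by_cases hyC : y ∈ interior C
    · exact Or.inl hyC
    · exact Or.inr fun hyc => disjoint_left.1 hsC hy ⟨hyc, hyC⟩
  refine (hs.subset_or_subset isOpen_interior isClosed_closure.isOpen_compl ?_ hcover).resolve_left
    fun h => hpC (h hp)
  exact disjoint_compl_right.mono_left interior_subset_closure

lemma Metric.le_infDist_of_disjoint_ball_frontier {E : Type*} [NormedAddCommGroup E]
    [NormedSpace ℝ E] {C : Set E} {p : E} {r : ℝ} (hC : C.Nonempty) (hp : p ∉ C)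
    (h : Disjoint (ball p r) (frontier C)) : r ≤ infDist p C := by
  rcases le_or_gt r 0 with hr | hr
  · exact hr.trans infDist_nonneg
  have hball := (convex_ball p r).isPreconnected.subset_compl_closure_of_disjoint_frontier h
    (mem_ball_self hr) fun hpi => hp (interior_subset hpi)
  rw [le_infDist hC]
  intro y hy
  by_contra! hyr
  exact hball (mem_ball'.2 hyr) (subset_closure hy)

lemma ContinuousOn.infDist_nonemptyCompacts {α β : Type*} [MetricSpace α] [TopologicalSpace β]
    {f : β → α} {K : β → NonemptyCompacts α} {s : Set β} (hf : ContinuousOn f s)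
    (hK : ContinuousOn K s) : ContinuousOn (fun t => infDist (f t) (K t : Set α)) s :=
  -- Without the ascription, unifying the Vietoris topology on `NonemptyCompacts α` with the
  -- Hausdorff-metric one (they are defeq) times out.
  (lipschitz_infDist.continuous.comp_continuousOn (hf.prodMk hK) :)

/-- **the "bubble" lemma.** Let `S, A` be continuous (w.r.t. the Hausdorff
distance) maps from `[a,b]` to the nonempty compact subsets of `ℝⁿ`, and `x` a continuous
curve with `x(a) ∈ int(S(a))` and `x(b) ∉ int(S(b))`. If `bd(S(t)) ⊆ A(t)` for all
`t ∈ [a,b]`, then `x(t') ∈ A(t')` for some `t' ∈ [a,b]`. -/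
theorem bubble_lemma
    {n : ℕ} (a b : ℝ) (hab : a ≤ b)
    (S A : ℝ → NonemptyCompacts (EuclideanSpace ℝ (Fin n)))
    (hS : ContinuousOn S (Set.Icc a b)) (hA : ContinuousOn A (Set.Icc a b))
    (x : ℝ → EuclideanSpace ℝ (Fin n)) (hx : ContinuousOn x (Set.Icc a b))
    (hxa : x a ∈ interior (S a : Set (EuclideanSpace ℝ (Fin n))))
    (hxb : x b ∉ interior (S b : Set (EuclideanSpace ℝ (Fin n))))
    (hbd : ∀ t ∈ Set.Icc a b,
      frontier (S t : Set (EuclideanSpace ℝ (Fin n))) ⊆ (A t : Set (EuclideanSpace ℝ (Fin n)))) :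
    ∃ t' ∈ Set.Icc a b, x t' ∈ (A t' : Set (EuclideanSpace ℝ (Fin n))) := by
  by_contra! hmiss
  have ha : a ∈ Icc a b := left_mem_Icc.2 hab
  have hb : b ∈ Icc a b := right_mem_Icc.2 hab
  obtain ⟨t₀, ht₀, hmin⟩ :=
    isCompact_Icc.exists_isMinOn (nonempty_Icc.2 hab) (hx.infDist_nonemptyCompacts hA)
  set δ := infDist (x t₀) (A t₀ : Set (EuclideanSpace ℝ (Fin n)))
  have hδ : 0 < δ :=
    ((A t₀).isCompact.isClosed.notMem_iff_infDist_pos (A t₀).nonempty).1 (hmiss t₀ ht₀)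
  have gap : ∀ t ∈ Icc a b, x t ∉ (S t : Set _) → δ ≤ infDist (x t) (S t : Set _) :=
    fun t ht hxt => le_infDist_of_disjoint_ball_frontier (S t).nonempty hxt <|
      (subset_compl_iff_disjoint_right.1 <| (ball_subset_ball (hmin ht)).trans
        ball_infDist_subset_compl).mono_right (hbd t ht)
  have hxbS : x b ∉ (S b : Set _) := fun h =>
    hmiss b hb (hbd b hb ((S b).isCompact.isClosed.frontier_eq ▸ ⟨h, hxb⟩))
  have hgap : ∀ t ∈ Icc a b, infDist (x t) (S t : Set _) ≠ δ / 2 := fun t ht h => by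
    by_cases hxt : x t ∈ (S t : Set _)
    · rw [infDist_zero_of_mem hxt] at h
      linarith
    · linarith [gap t ht hxt]
  have hlt := isPreconnected_Icc.lt_of_ne (hx.infDist_nonemptyCompacts hS) hgap
    ⟨b, hb, by linarith [gap b hb hxbS]⟩ ha
  rw [infDist_zero_of_mem (interior_subset hxa)] at hlt
  linarith
end

section
/- For every t ∈ [0,T], the en route reachable set satisfies R(t) = G(f,t,χᵢ) ∩ G(−f,T−t,χ_f). -/
open MeasureTheory Metric Set

noncomputable section

set_option maxHeartbeats 1000000

lemma continuousOn_union_closed' {α β : Type*} [TopologicalSpace α] [TopologicalSpace β]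
    {s t : Set α} {f : α → β} (hs : IsClosed s) (ht : IsClosed t)
    (hfs : ContinuousOn f s) (hft : ContinuousOn f t) : ContinuousOn f (s ∪ t) := by
  intro x hx
  apply ContinuousWithinAt.union
  · by_cases h : x ∈ s
    · exact hfs x h
    · exact continuousWithinAt_of_notMem_closure (by rwa [hs.closure_eq])
  · by_cases h : x ∈ t
    · exact hft x h
    · exact continuousWithinAt_of_notMem_closure (by rwa [ht.closure_eq])

lemma resp_integrable {n m : ℕ} {Ω : Set (En m)} (hΩ : IsCompact Ω)
    {f : En n → En m → En n} (hf : Continuous (fun q : En n × En m => f q.1 q.2))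
    {a b : ℝ} {χ : ℝ → En n} (hχ : ContinuousOn χ (Set.Icc a b))
    {u : ℝ → En m} (hu : Measurable u) (huΩ : ∀ s ∈ Set.Icc a b, u s ∈ Ω)
    {c d : ℝ} (hcd : Set.uIcc c d ⊆ Set.Icc a b) :
    IntervalIntegrable (fun τ => f (χ τ) (u τ)) volume c d := by
  have hK : IsCompact (χ '' Set.Icc a b) := (isCompact_Icc).image_of_continuousOn hχ
  obtain ⟨C, hC⟩ := ((hK.prod hΩ).exists_bound_of_continuousOn hf.continuousOn)
  have hsub : Set.uIoc c d ⊆ Set.Icc a b := Set.uIoc_subset_uIcc.trans hcd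
  have hχae : AEMeasurable χ (volume.restrict (Set.uIoc c d)) :=
    (hχ.aemeasurable measurableSet_Icc).mono_measure (Measure.restrict_mono hsub le_rfl)
  have haesm : AEStronglyMeasurable (fun τ => f (χ τ) (u τ))
      (volume.restrict (Set.uIoc c d)) :=
    (hf.measurable.comp_aemeasurable (hχae.prodMk hu.aemeasurable)).aestronglyMeasurable
  rw [intervalIntegrable_iff]
  refine ⟨haesm, ?_⟩
  rw [hasFiniteIntegral_def]
  have hb : ∀ᵐ τ ∂(volume.restrict (Set.uIoc c d)),
      (‖f (χ τ) (u τ)‖₊ : ENNReal) ≤ ENNReal.ofReal C := by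
    filter_upwards [ae_restrict_mem measurableSet_uIoc] with τ hτ
    rw [← enorm_eq_nnnorm, ← ofReal_norm]
    exact ENNReal.ofReal_le_ofReal
      (hC (χ τ, u τ) ⟨Set.mem_image_of_mem χ (hsub hτ), huΩ τ (hsub hτ)⟩)
  refine lt_of_le_of_lt (MeasureTheory.lintegral_mono_ae hb) ?_
  rw [MeasureTheory.lintegral_const, Measure.restrict_apply_univ, Set.uIoc]
  exact ENNReal.mul_lt_top ENNReal.ofReal_lt_top measure_Ioc_lt_top

/-- For every `t ∈ [0,T]`, the en route reachable set is the
intersection of the forward reachable set of `f` from `χi` at time `t` and the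
reachable set of `−f` from `χf` at time `T − t`. -/
theorem enRoute_eq_inter_reach
    {n m : ℕ} (T : ℝ) (hT : 0 < T) (χi χf : En n)
    (f : En n → En m → En n) (hf : ContDiff ℝ 1 (fun q : En n × En m => f q.1 q.2))
    (Ω : Set (En m)) (hΩ : IsCompact Ω) :
    ∀ t ∈ Set.Icc 0 T,
      EnRoute Ω f T χi χf t =
        Reach Ω f t χi ∩ Reach Ω (fun x w => -f x w) (T - t) χf := by
  have hfc : Continuous (fun q : En n × En m => f q.1 q.2) := hf.continuous
  rintro t ⟨ht0, htT⟩
  ext x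
  constructor
  · rintro ⟨χ, ⟨u, ⟨hu, huΩ⟩, ⟨hχc, hχeq⟩, hχT⟩, hχt⟩
    have hInt : ∀ {c d : ℝ}, Set.uIcc c d ⊆ Set.Icc 0 T →
        IntervalIntegrable (fun τ => f (χ τ) (u τ)) volume c d :=
      fun h => resp_integrable hΩ hfc hχc hu huΩ h
    constructor
    · refine ⟨χ, u, ⟨hu, fun s hs => huΩ s ⟨hs.1, hs.2.trans htT⟩⟩,
        ⟨hχc.mono (Set.Icc_subset_Icc le_rfl htT),
         fun s hs => hχeq s ⟨hs.1, hs.2.trans htT⟩⟩, hχt⟩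
    · refine ⟨fun s => χ (T - s), fun s => u (T - s),
        ⟨hu.comp (measurable_const.sub measurable_id), ?_⟩, ⟨?_, ?_⟩, ?_⟩
      · intro s hs
        exact huΩ (T - s) ⟨by linarith [hs.2.trans (by linarith : T - t ≤ T)], by linarith [hs.1]⟩
      · exact hχc.comp ((continuous_const.sub continuous_id).continuousOn)
          (fun s hs => ⟨by linarith [hs.2], by linarith [hs.1]⟩)
      · intro s hs
        have hTs : T - s ∈ Set.Icc (0:ℝ) T := ⟨by linarith [hs.2], by linarith [hs.1]⟩
        have h1 : χ T = χi + ∫ τ in (0:ℝ)..T, f (χ τ) (u τ) := hχeq T ⟨hT.le, le_rfl⟩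
        have h2 : χ (T - s) = χi + ∫ τ in (0:ℝ)..(T - s), f (χ τ) (u τ) := hχeq _ hTs
        have hsplit : (∫ τ in (0:ℝ)..(T - s), f (χ τ) (u τ)) +
            (∫ τ in (T - s)..T, f (χ τ) (u τ)) = ∫ τ in (0:ℝ)..T, f (χ τ) (u τ) :=
          intervalIntegral.integral_add_adjacent_intervals
            (hInt (by rw [Set.uIcc_of_le hTs.1]; exact Set.Icc_subset_Icc le_rfl hTs.2))
            (hInt (by rw [Set.uIcc_of_le hTs.2]; exact Set.Icc_subset_Icc hTs.1 le_rfl))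
        have hcv : (∫ τ in (0:ℝ)..s, -f (χ (T - τ)) (u (T - τ))) =
            -∫ τ in (T - s)..T, f (χ τ) (u τ) := by
          have := intervalIntegral.integral_comp_sub_left
            (a := (0:ℝ)) (b := s) (fun σ => -f (χ σ) (u σ)) T
          simp only [sub_zero] at this
          rw [this, intervalIntegral.integral_neg]
        rw [hcv]
        show χ (T - s) = χf + -∫ τ in (T - s)..T, f (χ τ) (u τ)
        rw [h2, ← hχT, h1, ← hsplit]
        abel
      · show χ (T - (T - t)) = x
        rw [show T - (T - t) = t by ring]; exact hχt
  · rintro ⟨⟨χ₁, u₁, ⟨hu₁, hu₁Ω⟩, ⟨hχ₁c, hχ₁eq⟩, hχ₁t⟩,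
      ⟨ψ, v, ⟨hv, hvΩ⟩, ⟨hψc, hψeq⟩, hψend⟩⟩
    have hψ0 : ψ 0 = χf := by
      have := hψeq 0 ⟨le_rfl, by linarith⟩
      simpa using this
    set χ : ℝ → En n := fun s => if s ≤ t then χ₁ s else ψ (T - s) with hχdef
    set u : ℝ → En m := fun s => if s ≤ t then u₁ s else v (T - s) with hudef
    have hglue : χ₁ t = ψ (T - t) := by rw [hχ₁t, hψend]
    have huM : Measurable u :=
      Measurable.ite measurableSet_Iic hu₁ (hv.comp (measurable_const.sub measurable_id))
    have huΩ : ∀ s ∈ Set.Icc (0:ℝ) T, u s ∈ Ω := by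
      intro s hs
      by_cases h : s ≤ t
      · simp only [hudef, if_pos h]; exact hu₁Ω s ⟨hs.1, h⟩
      · simp only [hudef, if_neg h]
        exact hvΩ (T - s) ⟨by linarith [hs.2], by linarith [not_le.mp h]⟩
    have hψc' : ContinuousOn (fun s => ψ (T - s)) (Set.Icc t T) :=
      hψc.comp ((continuous_const.sub continuous_id).continuousOn)
        (fun s hs => ⟨by linarith [hs.2], by linarith [hs.1]⟩)
    have hχc : ContinuousOn χ (Set.Icc 0 T) := by
      have h1 : ContinuousOn χ (Set.Icc 0 t) :=
        hχ₁c.congr (fun s hs => by simp only [hχdef, if_pos hs.2])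
      have h2 : ContinuousOn χ (Set.Icc t T) := by
        refine hψc'.congr (fun s hs => ?_)
        by_cases h : s ≤ t
        · have : s = t := le_antisymm h hs.1
          simp only [hχdef, this, if_pos le_rfl, hglue]
        · simp only [hχdef, if_neg h]
      rw [← Set.Icc_union_Icc_eq_Icc ht0 htT]
      exact continuousOn_union_closed' isClosed_Icc isClosed_Icc h1 h2
    have hInt : ∀ {c d : ℝ}, Set.uIcc c d ⊆ Set.Icc 0 T →
        IntervalIntegrable (fun τ => f (χ τ) (u τ)) volume c d :=
      fun h => resp_integrable hΩ hfc hχc huM huΩ h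
    have hIntψ : ∀ {c d : ℝ}, Set.uIcc c d ⊆ Set.Icc 0 (T - t) →
        IntervalIntegrable (fun σ => -f (ψ σ) (v σ)) volume c d :=
      fun h => resp_integrable (f := fun x w => -f x w) hΩ (by exact hfc.neg) hψc hv hvΩ h
    have key : ∀ s ∈ Set.Icc (0:ℝ) T, χ s = χi + ∫ τ in (0:ℝ)..s, f (χ τ) (u τ) := by
      intro s hs
      by_cases h : s ≤ t
      · have heq : (∫ τ in (0:ℝ)..s, f (χ τ) (u τ)) =
            ∫ τ in (0:ℝ)..s, f (χ₁ τ) (u₁ τ) := by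
          refine intervalIntegral.integral_congr (fun τ hτ => ?_)
          rw [Set.uIcc_of_le hs.1] at hτ
          have hτt : τ ≤ t := hτ.2.trans h
          simp only [hχdef, hudef, if_pos hτt]
        rw [heq, hχdef]
        simp only [if_pos h]
        exact hχ₁eq s ⟨hs.1, h⟩
      · push_neg at h
        have hs0t : (0:ℝ) ≤ t := ht0
        have hIt1 : IntervalIntegrable (fun τ => f (χ τ) (u τ)) volume 0 t :=
          hInt (by rw [Set.uIcc_of_le ht0]; exact Set.Icc_subset_Icc le_rfl htT)
        have hIt2 : IntervalIntegrable (fun τ => f (χ τ) (u τ)) volume t s :=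
          hInt (by rw [Set.uIcc_of_le h.le]; exact Set.Icc_subset_Icc ht0 hs.2)
        have hsplit : (∫ τ in (0:ℝ)..t, f (χ τ) (u τ)) + (∫ τ in t..s, f (χ τ) (u τ))
            = ∫ τ in (0:ℝ)..s, f (χ τ) (u τ) :=
          intervalIntegral.integral_add_adjacent_intervals hIt1 hIt2
        have hpart1 : (∫ τ in (0:ℝ)..t, f (χ τ) (u τ)) = x - χi := by
          have heq : (∫ τ in (0:ℝ)..t, f (χ τ) (u τ)) =
              ∫ τ in (0:ℝ)..t, f (χ₁ τ) (u₁ τ) := by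
            refine intervalIntegral.integral_congr (fun τ hτ => ?_)
            rw [Set.uIcc_of_le ht0] at hτ
            simp only [hχdef, hudef, if_pos hτ.2]
          rw [heq]
          have := hχ₁eq t ⟨ht0, le_rfl⟩
          rw [hχ₁t] at this
          rw [this]; abel
        have hpart2 : (∫ τ in t..s, f (χ τ) (u τ)) = ψ (T - s) - x := by
          have heq : (∫ τ in t..s, f (χ τ) (u τ)) =
              ∫ τ in t..s, f (ψ (T - τ)) (v (T - τ)) := by
            refine intervalIntegral.integral_congr_ae ?_
            filter_upwards with τ hτ
            rw [Set.uIoc_of_le h.le] at hτ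
            have : ¬ τ ≤ t := not_le.mpr hτ.1
            simp only [hχdef, hudef, if_neg this]
          have hcv : (∫ τ in t..s, f (ψ (T - τ)) (v (T - τ))) =
              ∫ σ in (T - s)..(T - t), f (ψ σ) (v σ) :=
            intervalIntegral.integral_comp_sub_left (a := t) (b := s)
              (fun σ => f (ψ σ) (v σ)) T
          have hTs : T - s ∈ Set.Icc (0:ℝ) (T - t) := ⟨by linarith [hs.2], by linarith⟩
          have hI1 : IntervalIntegrable (fun σ => -f (ψ σ) (v σ)) volume 0 (T - s) :=
            hIntψ (by rw [Set.uIcc_of_le hTs.1]; exact Set.Icc_subset_Icc le_rfl hTs.2)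
          have hI2 : IntervalIntegrable (fun σ => -f (ψ σ) (v σ)) volume (T - s) (T - t) :=
            hIntψ (by rw [Set.uIcc_of_le (by linarith : T - s ≤ T - t)]
                      exact Set.Icc_subset_Icc hTs.1 le_rfl)
          have hsplit2 : (∫ σ in (0:ℝ)..(T - s), -f (ψ σ) (v σ)) +
              (∫ σ in (T - s)..(T - t), -f (ψ σ) (v σ))
              = ∫ σ in (0:ℝ)..(T - t), -f (ψ σ) (v σ) :=
            intervalIntegral.integral_add_adjacent_intervals hI1 hI2
          have e1 : ψ (T - t) = χf + ∫ σ in (0:ℝ)..(T - t), -f (ψ σ) (v σ) :=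
            hψeq _ ⟨by linarith, le_rfl⟩
          have e2 : ψ (T - s) = χf + ∫ σ in (0:ℝ)..(T - s), -f (ψ σ) (v σ) :=
            hψeq _ hTs
          have : (∫ σ in (T - s)..(T - t), -f (ψ σ) (v σ)) = ψ (T - t) - ψ (T - s) := by
            rw [e1, e2, ← hsplit2]; abel
          rw [heq, hcv]
          rw [show (∫ σ in (T - s)..(T - t), f (ψ σ) (v σ)) =
              -∫ σ in (T - s)..(T - t), -f (ψ σ) (v σ) by
            rw [intervalIntegral.integral_neg, neg_neg], this, hψend]
          abel
        rw [← hsplit, hpart1, hpart2, hχdef]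
        simp only [if_neg (not_le.mpr h)]
        abel
    refine ⟨χ, ⟨u, ⟨huM, huΩ⟩, ⟨hχc, key⟩, ?_⟩, ?_⟩
    · by_cases h : T ≤ t
      · have htT' : t = T := le_antisymm htT h
        simp only [hχdef, if_pos h]
        rw [← htT', hχ₁t]
        rw [htT', sub_self] at hψend
        rw [← hψend]
        exact hψ0
      · simp only [hχdef, if_neg h, sub_self, hψ0]
    · simp only [hχdef, if_pos le_rfl]; exact hχ₁t
end
end

section
/- Suppose χ, p : [0,t_f] → ℝⁿ are continuous, p is not identically zero, and (χ(t),p(t)) = (χ(0),p(0)) + ∫₀ᵗ φ(s) ds for all t ∈ [0,t_f], where φ : [0,t_f] → ℝⁿ × ℝⁿ is integrable and satisfies φ(t) ∈ F(χ(t),p(t)) for almost every t, with U(x,q) = argmax_{u ∈ Ω} ⟨q, f(x,u)⟩ and F(x,q) = {(f(x,u), −(D_x f(x,u))ᵀ q) : u ∈ U(x,q)}. Then there exists a measurable u : [0,t_f] → ℝᵐ with u(t) ∈ U(χ(t),p(t)) ⊆ Ω for all t such that χ is the response of u from χ(0), p satisfies the adjoint integral equation p(t) = p(0) − ∫₀ᵗ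 (D_x f(χ(s),u(s)))ᵀ p(s) ds, and ⟨p(t), f(χ(t),u(t))⟩ = max_{ω ∈ Ω} ⟨p(t), f(χ(t),ω)⟩ for almost every t; that is, (χ,p,u) is an extremal triple of f on [0,t_f] from χ(0). -/
open MeasureTheory Metric Set

noncomputable section

set_option linter.unusedSectionVars false
set_option linter.unusedVariables false
set_option maxHeartbeats 1000000
open Filter

section Selection

variable {m : ℕ}

/-- A dense sequence in a nonempty subset of Euclidean space. -/
lemma exists_dense_seq_in {Ω : Set (En m)} (hne : Ω.Nonempty) :
    ∃ e : ℕ → En m, (∀ j, e j ∈ Ω) ∧ ∀ u ∈ Ω, ∀ ε > 0, ∃ j, dist (e j) u < ε := by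
  haveI : Nonempty Ω := hne.to_subtype
  obtain ⟨s, hs⟩ := TopologicalSpace.exists_dense_seq Ω
  refine ⟨fun j => (s j : En m), fun j => (s j).2, fun u hu ε hε => ?_⟩
  obtain ⟨j, hj⟩ := hs.exists_dist_lt (⟨u, hu⟩ : Ω) hε
  exact ⟨j, by simpa [Subtype.dist_eq, dist_comm] using hj⟩

/-- Penalized functional used for measurable selections. -/
def selD (Φ : ℝ → En m → ℝ) (e : ℕ → En m) (q : En m) (r t : ℝ) : ℝ :=
  ⨅ j, (Φ t (e j) + max 0 (dist (e j) q - r))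

lemma selD_nonneg {Φ : ℝ → En m → ℝ} (hΦ0 : ∀ t u, 0 ≤ Φ t u)
    (e : ℕ → En m) (q : En m) (r t : ℝ) : 0 ≤ selD Φ e q r t :=
  le_ciInf fun j => add_nonneg (hΦ0 t (e j)) (le_max_left _ _)

lemma selD_bddBelow {Φ : ℝ → En m → ℝ} (hΦ0 : ∀ t u, 0 ≤ Φ t u)
    (e : ℕ → En m) (q : En m) (r t : ℝ) :
    BddBelow (Set.range fun j => (Φ t (e j) + max 0 (dist (e j) q - r))) :=
  ⟨0, by rintro x ⟨j, rfl⟩; exact add_nonneg (hΦ0 t (e j)) (le_max_left _ _)⟩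

lemma measurable_selD {Φ : ℝ → En m → ℝ} (hΦm : ∀ w, Measurable fun t => Φ t w)
    (hΦ0 : ∀ t u, 0 ≤ Φ t u) (e : ℕ → En m) (q : En m) (r : ℝ) :
    Measurable (selD Φ e q r) := by
  have hmj : ∀ j : ℕ, Measurable fun t => Φ t (e j) + max 0 (dist (e j) q - r) :=
    fun j => (hΦm (e j)).add measurable_const
  apply measurable_of_Iio
  intro a
  have : selD Φ e q r ⁻¹' Iio a =
      ⋃ j, {t | Φ t (e j) + max 0 (dist (e j) q - r) < a} := by
    ext t
    simp only [mem_preimage, mem_Iio, mem_iUnion, mem_setOf_eq]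
    constructor
    · intro h
      exact exists_lt_of_ciInf_lt h
    · rintro ⟨j, hj⟩
      exact lt_of_le_of_lt (ciInf_le (selD_bddBelow hΦ0 e q r t) j) hj
  rw [this]
  exact MeasurableSet.iUnion fun j => measurableSet_lt (hmj j) measurable_const

lemma selD_eq_zero_iff {Ω : Set (En m)} (hΩ : IsCompact Ω)
    {Φ : ℝ → En m → ℝ} (hΦc : ∀ t, Continuous fun u => Φ t u)
    (hΦ0 : ∀ t u, 0 ≤ Φ t u) {e : ℕ → En m} (heΩ : ∀ j, e j ∈ Ω)
    (hed : ∀ u ∈ Ω, ∀ ε > 0, ∃ j, dist (e j) u < ε) (q : En m) (r t : ℝ) :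
    selD Φ e q r t = 0 ↔ ∃ u ∈ Ω, Φ t u = 0 ∧ dist u q ≤ r := by
  constructor
  · intro h
    have key : ∀ k : ℕ, ∃ j, Φ t (e j) < (1 : ℝ)/(k+1) ∧
        max 0 (dist (e j) q - r) < (1 : ℝ)/(k+1) := by
      intro k
      have hpos : (0:ℝ) < 1/(k+1) := by positivity
      have hlt : selD Φ e q r t < 1/(k+1) := by rw [h]; exact hpos
      obtain ⟨j, hj⟩ := exists_lt_of_ciInf_lt hlt
      refine ⟨j, ?_, ?_⟩
      · exact lt_of_le_of_lt (le_add_of_nonneg_right (le_max_left _ _)) hj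
      · exact lt_of_le_of_lt (le_add_of_nonneg_left (hΦ0 t (e j))) hj
    choose js hjs1 hjs2 using key
    obtain ⟨u, huΩ, ψ, hψ, hψt⟩ := hΩ.tendsto_subseq (fun k => heΩ (js k))
    have hlim0 : Tendsto (fun k : ℕ => (1:ℝ)/(k+1)) atTop (nhds 0) :=
      tendsto_one_div_add_atTop_nhds_zero_nat
    have hlimψ : Tendsto (fun i : ℕ => (1:ℝ)/(ψ i + 1)) atTop (nhds 0) :=
      hlim0.comp hψ.tendsto_atTop
    refine ⟨u, huΩ, ?_, ?_⟩
    · have h1 : Tendsto (fun i => Φ t (e (js (ψ i)))) atTop (nhds (Φ t u)) :=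
        ((hΦc t).tendsto u).comp hψt
      have h2 : Φ t u ≤ 0 :=
        le_of_tendsto_of_tendsto' h1 hlimψ fun i => (hjs1 (ψ i)).le
      exact le_antisymm h2 (hΦ0 t u)
    · have h1 : Tendsto (fun i => dist (e (js (ψ i))) q) atTop (nhds (dist u q)) := by
        have hc1 : Continuous fun w : En m => dist w q := continuous_id.dist continuous_const
        exact (hc1.tendsto u).comp hψt
      have h2 : Tendsto (fun i : ℕ => r + (1:ℝ)/(ψ i + 1)) atTop (nhds (r + 0)) :=
        tendsto_const_nhds.add hlimψ
      have h3 : dist u q ≤ r + 0 := by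
        refine le_of_tendsto_of_tendsto' h1 h2 fun i => ?_
        have h5 := hjs2 (ψ i)
        have h4 : dist (e (js (ψ i))) q - r < 1/(ψ i + 1) :=
          lt_of_le_of_lt (le_max_right _ _) h5
        linarith
      simpa using h3
  · rintro ⟨u, huΩ, hFu, hdu⟩
    refine le_antisymm ?_ (selD_nonneg hΦ0 e q r t)
    refine le_of_forall_pos_le_add ?_
    intro ε hε
    obtain ⟨δ, hδ, hball⟩ := Metric.continuousAt_iff.mp ((hΦc t).continuousAt (x := u)) (ε/2)
      (by linarith)
    obtain ⟨j, hj⟩ := hed u huΩ (min δ (ε/2)) (by positivity)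
    have hjδ : dist (e j) u < δ := lt_of_lt_of_le hj (min_le_left _ _)
    have hjε : dist (e j) u < ε/2 := lt_of_lt_of_le hj (min_le_right _ _)
    have h1 : Φ t (e j) < ε/2 := by
      have hb := hball hjδ
      rw [Real.dist_eq, hFu, sub_zero] at hb
      calc Φ t (e j) ≤ |Φ t (e j)| := le_abs_self _
        _ < ε/2 := hb
    have h2 : max 0 (dist (e j) q - r) ≤ ε/2 := by
      have ht1 : dist (e j) q ≤ dist (e j) u + dist u q := dist_triangle _ _ _
      have ht2 : dist (e j) q - r ≤ ε/2 := by linarith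
      exact max_le (by linarith) ht2
    calc selD Φ e q r t ≤ Φ t (e j) + max 0 (dist (e j) q - r) :=
          ciInf_le (selD_bddBelow hΦ0 e q r t) j
      _ ≤ ε/2 + ε/2 := by linarith
      _ = 0 + ε := by ring

lemma nat_rec_exists {α : ℕ → Type} (a0 : α 0) (st : ∀ k, α k → α (k+1)) :
    ∃ g : ∀ k, α k, g 0 = a0 ∧ ∀ k, g (k+1) = st k (g k) :=
  ⟨fun k => Nat.rec a0 st k, rfl, fun _ => rfl⟩

lemma measurableSet_sel_dom {Ω : Set (En m)} (hΩ : IsCompact Ω) (hne : Ω.Nonempty)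
    {Φ : ℝ → En m → ℝ} (hΦm : ∀ w, Measurable fun t => Φ t w)
    (hΦc : ∀ t, Continuous fun u => Φ t u) (hΦ0 : ∀ t u, 0 ≤ Φ t u) :
    MeasurableSet {t | ∃ u ∈ Ω, Φ t u = 0} := by
  obtain ⟨e, heΩ, hed⟩ := exists_dense_seq_in hne
  obtain ⟨R, hR⟩ := hΩ.isBounded.subset_closedBall (e 0)
  have hiff : {t | ∃ u ∈ Ω, Φ t u = 0} = {t | selD Φ e (e 0) R t = 0} := by
    ext t
    simp only [mem_setOf_eq]
    rw [selD_eq_zero_iff hΩ hΦc hΦ0 heΩ hed (e 0) R t]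
    constructor
    · rintro ⟨u, hu, hFu⟩; exact ⟨u, hu, hFu, hR hu⟩
    · rintro ⟨u, hu, hFu, -⟩; exact ⟨u, hu, hFu⟩
  rw [hiff]
  exact (measurable_selD hΦm hΦ0 e (e 0) R) (measurableSet_singleton 0)

lemma exists_measurable_selection {Ω : Set (En m)} (hΩ : IsCompact Ω)
    {Φ : ℝ → En m → ℝ} (hΦm : ∀ w, Measurable fun t => Φ t w)
    (hΦc : ∀ t, Continuous fun u => Φ t u) (hΦ0 : ∀ t u, 0 ≤ Φ t u)
    (hS : ∀ t, ∃ u ∈ Ω, Φ t u = 0) :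
    ∃ σ : ℝ → En m, Measurable σ ∧ ∀ t, σ t ∈ Ω ∧ Φ t (σ t) = 0 := by
  classical
  have hne : Ω.Nonempty := by obtain ⟨u, hu, -⟩ := hS 0; exact ⟨u, hu⟩
  obtain ⟨e, heΩ, hed⟩ := exists_dense_seq_in hne
  set r : ℕ → ℝ := fun k => (2:ℝ)⁻¹ ^ k with hr
  have hrpos : ∀ k, 0 < r k := fun k => by positivity
  have hiff := fun q rr t => selD_eq_zero_iff hΩ hΦc hΦ0 heΩ hed q rr t
  have h0 : ∀ t, ∃ i, selD Φ e (e i) (r 0) t = 0 := by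
    intro t
    obtain ⟨u, huΩ, hFu⟩ := hS t
    obtain ⟨j, hj⟩ := hed u huΩ (r 0) (hrpos 0)
    exact ⟨j, (hiff (e j) (r 0) t).mpr ⟨u, huΩ, hFu, by rw [dist_comm]; exact hj.le⟩⟩
  have hstep : ∀ (k : ℕ) (j : ℝ → ℕ), Measurable j →
      (∀ t, selD Φ e (e (j t)) (r k) t = 0) →
      ∃ j' : ℝ → ℕ, Measurable j' ∧ (∀ t, selD Φ e (e (j' t)) (r (k+1)) t = 0) ∧
        ∀ t, dist (e (j' t)) (e (j t)) ≤ r (k+1) + r k := by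
    intro k j hjm hj0
    have hex : ∀ t, ∃ i, selD Φ e (e i) (r (k+1)) t = 0 ∧
        dist (e i) (e (j t)) ≤ r (k+1) + r k := by
      intro t
      obtain ⟨u, huΩ, hFu, hdu⟩ := (hiff (e (j t)) (r k) t).mp (hj0 t)
      obtain ⟨i, hi⟩ := hed u huΩ (r (k+1)) (hrpos (k+1))
      refine ⟨i, (hiff _ _ t).mpr ⟨u, huΩ, hFu, by rw [dist_comm]; exact hi.le⟩, ?_⟩
      calc dist (e i) (e (j t)) ≤ dist (e i) u + dist u (e (j t)) := dist_triangle _ _ _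
        _ ≤ r (k+1) + r k := add_le_add hi.le hdu
    refine ⟨fun t => Nat.find (hex t), ?_, fun t => (Nat.find_spec (hex t)).1,
      fun t => (Nat.find_spec (hex t)).2⟩
    apply measurable_find hex
    intro i
    have h1 : MeasurableSet {t | selD Φ e (e i) (r (k+1)) t = 0} :=
      (measurable_selD hΦm hΦ0 e (e i) (r (k+1))) (measurableSet_singleton 0)
    have h2 : MeasurableSet {t | dist (e i) (e (j t)) ≤ r (k+1) + r k} := by
      have heq2 : {t | dist (e i) (e (j t)) ≤ r (k+1) + r k} =
          j ⁻¹' {l | dist (e i) (e l) ≤ r (k+1) + r k} := rfl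
      rw [heq2]; exact hjm trivial
    exact (h1.inter h2 : MeasurableSet {t | selD Φ e (e i) (r (k+1)) t = 0 ∧
      dist (e i) (e (j t)) ≤ r (k+1) + r k})
  let α : ℕ → Type := fun k =>
    {j : ℝ → ℕ // Measurable j ∧ ∀ t, selD Φ e (e (j t)) (r k) t = 0}
  let a0 : α 0 := ⟨fun t => Nat.find (h0 t),
    measurable_find h0 (fun i => (measurable_selD hΦm hΦ0 e (e i) (r 0))
      (measurableSet_singleton 0)),
    fun t => Nat.find_spec (h0 t)⟩
  let st : ∀ k, α k → α (k+1) := fun k a =>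
    ⟨(hstep k a.1 a.2.1 a.2.2).choose, (hstep k a.1 a.2.1 a.2.2).choose_spec.1,
      (hstep k a.1 a.2.1 a.2.2).choose_spec.2.1⟩
  obtain ⟨g, hg0, hgs⟩ := nat_rec_exists a0 st
  set v : ℕ → ℝ → En m := fun k t => e ((g k).1 t) with hv
  have hvm : ∀ k, Measurable (v k) := fun k => measurable_from_top.comp (g k).2.1
  have hvz : ∀ k t, selD Φ e (v k t) (r k) t = 0 := fun k t => (g k).2.2 t
  have hvd : ∀ k t, dist (v (k+1) t) (v k t) ≤ r (k+1) + r k := by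
    intro k t
    have hch := (hstep k (g k).1 (g k).2.1 (g k).2.2).choose_spec.2.2 t
    have hsub : (g (k+1)).1 = (hstep k (g k).1 (g k).2.1 (g k).2.2).choose := by
      rw [hgs k]
    show dist (e ((g (k+1)).1 t)) (e ((g k).1 t)) ≤ r (k+1) + r k
    rw [hsub]; exact hch
  have hcau : ∀ t, CauchySeq fun k => v k t := by
    intro t
    apply cauchySeq_of_le_geometric (2:ℝ)⁻¹ 2 (by norm_num)
    intro k
    rw [dist_comm]
    calc dist (v (k+1) t) (v k t) ≤ r (k+1) + r k := hvd k t
      _ ≤ 2 * (2:ℝ)⁻¹ ^ k := by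
        have h1 : r (k+1) ≤ r k := by
          simp only [hr, pow_succ]
          nlinarith [pow_pos (by norm_num : (0:ℝ) < 2⁻¹) k]
        have h2 : r k = (2:ℝ)⁻¹ ^ k := rfl
        linarith [h1, h2.le]
  have hlim : ∀ t, ∃ x, Tendsto (fun k => v k t) atTop (nhds x) :=
    fun t => cauchySeq_tendsto_of_complete (hcau t)
  set σ : ℝ → En m := fun t => (hlim t).choose with hσ
  have hσt : ∀ t, Tendsto (fun k => v k t) atTop (nhds (σ t)) := fun t => (hlim t).choose_spec
  have hσm : Measurable σ := measurable_of_tendsto_metrizable hvm (tendsto_pi_nhds.mpr hσt)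
  refine ⟨σ, hσm, fun t => ?_⟩
  have hw : ∀ k, ∃ u ∈ Ω, Φ t u = 0 ∧ dist u (v k t) ≤ r k :=
    fun k => (hiff (v k t) (r k) t).mp (hvz k t)
  choose w hwΩ hwF hwd using hw
  have hr0 : Tendsto r atTop (nhds 0) := by
    simpa [hr] using tendsto_pow_atTop_nhds_zero_of_lt_one (by norm_num : (0:ℝ) ≤ 2⁻¹)
      (by norm_num : (2:ℝ)⁻¹ < 1)
  have hwt : Tendsto w atTop (nhds (σ t)) := by
    rw [tendsto_iff_dist_tendsto_zero]
    have hb : ∀ k, dist (w k) (σ t) ≤ r k + dist (v k t) (σ t) := fun k =>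
      (dist_triangle (w k) (v k t) (σ t)).trans (add_le_add (hwd k) le_rfl)
    have h1 : Tendsto (fun k => r k + dist (v k t) (σ t)) atTop (nhds (0 + 0)) :=
      hr0.add (tendsto_iff_dist_tendsto_zero.mp (hσt t))
    exact squeeze_zero (fun k => dist_nonneg) hb (by simpa using h1)
  constructor
  · exact hΩ.isClosed.mem_of_tendsto hwt (Filter.Eventually.of_forall hwΩ)
  · have h1 : Tendsto (fun k => Φ t (w k)) atTop (nhds (Φ t (σ t))) :=
      ((hΦc t).tendsto (σ t)).comp hwt
    have h2 : (fun k => Φ t (w k)) = fun _ => (0:ℝ) := funext fun k => hwF k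
    rw [h2] at h1
    exact tendsto_nhds_unique h1 tendsto_const_nhds

end Selection

section MainAux

variable {n m : ℕ}

lemma fderiv_partial (f : En n → En m → En n)
    (hf : ContDiff ℝ 1 fun q : En n × En m => f q.1 q.2) (x : En n) (u : En m) :
    fderiv ℝ (fun y => f y u) x =
      (fderiv ℝ (fun q : En n × En m => f q.1 q.2) (x, u)).comp
        (ContinuousLinearMap.inl ℝ (En n) (En m)) := by
  have h1 : HasFDerivAt (fun q : En n × En m => f q.1 q.2)
      (fderiv ℝ (fun q : En n × En m => f q.1 q.2) (x, u)) (x, u) :=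
    (hf.differentiable one_ne_zero (x, u)).hasFDerivAt
  have h2 : HasFDerivAt (fun y : En n => (y, u))
      (ContinuousLinearMap.inl ℝ (En n) (En m)) x := hasFDerivAt_prodMk_left x u
  exact (h1.comp x h2).fderiv

lemma adjoint_cont (f : En n → En m → En n)
    (hf : ContDiff ℝ 1 fun q : En n × En m => f q.1 q.2) :
    Continuous fun q : En n × En m =>
      (ContinuousLinearMap.adjoint (fderiv ℝ (fun y => f y q.2) q.1) : En n →L[ℝ] En n) := by
  have heq : (fun q : En n × En m => fderiv ℝ (fun y => f y q.2) q.1) =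
      fun q : En n × En m => (fderiv ℝ (fun q : En n × En m => f q.1 q.2) q).comp
        (ContinuousLinearMap.inl ℝ (En n) (En m)) := by
    funext q
    exact fderiv_partial f hf q.1 q.2
  have h1 : Continuous fun q : En n × En m => fderiv ℝ (fun y => f y q.2) q.1 := by
    rw [heq]
    exact (hf.continuous_fderiv one_ne_zero).clm_comp continuous_const
  exact (ContinuousLinearMap.adjoint :
    (En n →L[ℝ] En n) ≃ₗᵢ⋆[ℝ] (En n →L[ℝ] En n)).continuous.comp h1

lemma exists_max_fun {Ω : Set (En m)} (hΩ : IsCompact Ω) (hne : Ω.Nonempty)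
    {G : ℝ → En m → ℝ} (hG : Continuous fun q : ℝ × En m => G q.1 q.2) :
    ∃ M : ℝ → ℝ, Measurable M ∧ (∀ t, ∀ u ∈ Ω, G t u ≤ M t) ∧ ∀ t, ∃ u ∈ Ω, G t u = M t := by
  obtain ⟨e, heΩ, hed⟩ := exists_dense_seq_in hne
  have hGt : ∀ t, Continuous (G t) := fun t =>
    hG.comp (continuous_const.prodMk continuous_id)
  have hbdd : ∀ t, BddAbove (Set.range fun j => G t (e j)) := by
    intro t
    refine ((hΩ.image (hGt t)).bddAbove).mono ?_
    rintro x ⟨j, rfl⟩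
    exact ⟨e j, heΩ j, rfl⟩
  have hmax : ∀ t, ∃ u ∈ Ω, IsMaxOn (G t) Ω u := fun t =>
    hΩ.exists_isMaxOn hne (hGt t).continuousOn
  choose ustar huΩs hustarmax using hmax
  set M : ℝ → ℝ := fun t => ⨆ j, G t (e j) with hM
  have hMeq : ∀ t, M t = G t (ustar t) := by
    intro t
    refine le_antisymm (ciSup_le fun j => hustarmax t (heΩ j)) ?_
    have hseq : ∀ k : ℕ, ∃ j, dist (e j) (ustar t) < 1/(k+1) :=
      fun k => hed _ (huΩs t) _ (by positivity)
    choose js hjs using hseq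
    have h1 : Tendsto (fun k => e (js k)) atTop (nhds (ustar t)) := by
      rw [tendsto_iff_dist_tendsto_zero]
      refine squeeze_zero (fun k => dist_nonneg) (fun k => (hjs k).le) ?_
      exact tendsto_one_div_add_atTop_nhds_zero_nat
    have h2 : Tendsto (fun k => G t (e (js k))) atTop (nhds (G t (ustar t))) :=
      ((hGt t).tendsto _).comp h1
    exact le_of_tendsto h2 (Filter.Eventually.of_forall fun k => le_ciSup (hbdd t) (js k))
  refine ⟨M, ?_, fun t u hu => (hustarmax t hu).trans (hMeq t).ge,
    fun t => ⟨ustar t, huΩs t, (hMeq t).symm⟩⟩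
  apply measurable_of_Iic
  intro a
  have hpre : M ⁻¹' Iic a = ⋂ j, {t | G t (e j) ≤ a} := by
    ext t
    simp only [mem_preimage, mem_Iic, mem_iInter, mem_setOf_eq]
    constructor
    · intro h j
      exact (le_ciSup (hbdd t) j).trans h
    · intro h
      exact ciSup_le h
  rw [hpre]
  refine MeasurableSet.iInter fun j => ?_
  exact measurableSet_le
    ((hG.comp (continuous_id.prodMk continuous_const)).measurable) measurable_const

end MainAux


/-- An extremal triple `(χ, p, u)` of the system `g` on `[0, t_f]` from `x₀`:
`u` admissible, `χ` its response, `p` a nontrivial solution of the adjoint equation,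
and the Hamiltonian maximum condition holds a.e. -/
def IsExtremalTriple {n m : ℕ} (Ω : Set (En m)) (g : En n → En m → En n)
    (tf : ℝ) (x₀ : En n) (χ : ℝ → En n) (p : ℝ → En n) (u : ℝ → En m) : Prop :=
  IsAdmissible Ω 0 tf u ∧ IsResponse g 0 tf x₀ χ u ∧
  ContinuousOn p (Set.Icc 0 tf) ∧ (∃ t ∈ Set.Icc 0 tf, p t ≠ 0) ∧
  (∀ t ∈ Set.Icc 0 tf,
    p t = p 0 - ∫ s in (0:ℝ)..t,
      (ContinuousLinearMap.adjoint (fderiv ℝ (fun x => g x (u s)) (χ s))) (p s)) ∧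
  ∀ᵐ t ∂(volume.restrict (Set.Icc 0 tf)),
    ∀ ω ∈ Ω, (inner ℝ (p t) (g (χ t) ω) : ℝ) ≤ inner ℝ (p t) (g (χ t) (u t))

/-- `E(g, t_f, x₀)`: endpoints of extremal trajectories. -/
def ExtremalEndpoints {n m : ℕ} (Ω : Set (En m)) (g : En n → En m → En n)
    (tf : ℝ) (x₀ : En n) : Set (En n) :=
  {y | ∃ χ p u, IsExtremalTriple Ω g tf x₀ χ p u ∧ χ tf = y}

/-- `U(x, p)`: the set of maximizers of the Hamiltonian over `Ω`. -/
def Umax {n m : ℕ} (Ω : Set (En m)) (f : En n → En m → En n) (x p : En n) :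
    Set (En m) :=
  {u ∈ Ω | ∀ ω ∈ Ω, (inner ℝ p (f x ω) : ℝ) ≤ inner ℝ p (f x u)}

/-- `F(x, p) = {(f(x,u), −(D_x f(x,u))ᵀ p) : u ∈ U(x,p)}`. -/
def Fmap {n m : ℕ} (Ω : Set (En m)) (f : En n → En m → En n) (x p : En n) :
    Set (En n × En n) :=
  {v | ∃ u ∈ Umax Ω f x p,
    v = (f x u, -((ContinuousLinearMap.adjoint (fderiv ℝ (fun y => f y u) x)) p))}

/-- A solution `(χ, p)` of the differential inclusion
`(χ̇, ṗ) ∈ F(χ, p)` with `p` not identically zero gives rise to an extremal triple: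
there is a measurable selection `u` with `u(t) ∈ U(χ(t),p(t)) ⊆ Ω` for all `t`, such
that `(χ, p, u)` is an extremal triple of `f` on `[0,t_f]` from `χ(0)`. -/
theorem diff_inclusion_gives_extremal
    {n m : ℕ} (tf : ℝ) (htf : 0 < tf)
    (f : En n → En m → En n) (hf : ContDiff ℝ 1 (fun q : En n × En m => f q.1 q.2))
    (Ω : Set (En m)) (hΩ : IsCompact Ω)
    (χ p : ℝ → En n)
    (hχ : ContinuousOn χ (Set.Icc 0 tf)) (hp : ContinuousOn p (Set.Icc 0 tf))
    (hp0 : ∃ t ∈ Set.Icc 0 tf, p t ≠ 0)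
    (φ : ℝ → En n × En n)
    (hφint : IntegrableOn φ (Set.Icc 0 tf))
    (heq : ∀ t ∈ Set.Icc 0 tf, (χ t, p t) = (χ 0, p 0) + ∫ s in (0:ℝ)..t, φ s)
    (hmem : ∀ᵐ t ∂(volume.restrict (Set.Icc 0 tf)), φ t ∈ Fmap Ω f (χ t) (p t)) :
    ∃ u : ℝ → En m, Measurable u ∧
      (∀ t ∈ Set.Icc 0 tf, u t ∈ Umax Ω f (χ t) (p t)) ∧
      IsExtremalTriple Ω f tf (χ 0) χ p u := by
  classical
  have hIccvol : (volume.restrict (Set.Icc 0 tf)) ≠ 0 := by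
    intro h
    have h2 : volume (Set.Icc (0:ℝ) tf) = 0 := by
      rw [← Measure.restrict_apply_univ, h]; simp
    rw [Real.volume_Icc] at h2
    simp only [ENNReal.ofReal_eq_zero, sub_zero] at h2
    linarith
  haveI : (MeasureTheory.ae (volume.restrict (Set.Icc 0 tf))).NeBot := ae_neBot.mpr hIccvol
  obtain ⟨t0, ht0⟩ := hmem.exists
  have hΩne : Ω.Nonempty := by
    obtain ⟨w, hw, -⟩ := ht0
    exact ⟨w, hw.1⟩
  -- clamp to the interval
  obtain ⟨π, hπeq, hπc⟩ : ∃ g : ℝ → ℝ, (∀ t, g t = max 0 (min t tf)) ∧ Continuous g :=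
    ⟨fun t => max 0 (min t tf), fun _ => rfl,
      continuous_const.max (continuous_id.min continuous_const)⟩
  have hπmem : ∀ t, π t ∈ Set.Icc 0 tf := fun t => by
    rw [hπeq]
    exact ⟨le_max_left _ _, max_le htf.le (min_le_right t tf)⟩
  have hπid : ∀ t ∈ Set.Icc 0 tf, π t = t := by
    intro t ht
    rw [hπeq]
    simp only [min_eq_left ht.2, max_eq_right ht.1]
  obtain ⟨χt, hχteq, hχtc⟩ : ∃ g : ℝ → En n, (∀ t, g t = χ (π t)) ∧ Continuous g :=
    ⟨fun t => χ (π t), fun _ => rfl, hχ.comp_continuous hπc hπmem⟩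
  obtain ⟨pt, hpteq, hptc⟩ : ∃ g : ℝ → En n, (∀ t, g t = p (π t)) ∧ Continuous g :=
    ⟨fun t => p (π t), fun _ => rfl, hp.comp_continuous hπc hπmem⟩
  -- measurable representative of φ
  obtain ⟨ψ, hψmeas, hψφ⟩ : ∃ ψ : ℝ → En n × En n, Measurable ψ ∧
      ∀ᵐ s ∂(volume.restrict (Set.Icc 0 tf)), ψ s = φ s := by
    have hφm : AEStronglyMeasurable φ (volume.restrict (Set.Icc 0 tf)) :=
      hφint.aestronglyMeasurable
    exact ⟨hφm.mk φ, hφm.stronglyMeasurable_mk.measurable,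
      hφm.ae_eq_mk.symm.mono (fun s h => h)⟩
  -- the Hamiltonian
  obtain ⟨G, hGeq, hGc⟩ : ∃ G : ℝ → En m → ℝ,
      (∀ t u, G t u = inner ℝ (pt t) (f (χt t) u)) ∧
      Continuous fun q : ℝ × En m => G q.1 q.2 := by
    refine ⟨fun t u => inner ℝ (pt t) (f (χt t) u), fun _ _ => rfl, ?_⟩
    apply Continuous.inner
    · exact hptc.comp continuous_fst
    · exact hf.continuous.comp ((hχtc.comp continuous_fst).prodMk continuous_snd)
  obtain ⟨M, hMmeas, hMub, hMatt⟩ := exists_max_fun hΩ hΩne hGc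
  -- velocity and adjoint terms
  obtain ⟨B, hBeq, hBc⟩ : ∃ B : ℝ → En m → En n, (∀ t u, B t u = f (χt t) u) ∧
      Continuous fun q : ℝ × En m => B q.1 q.2 :=
    ⟨fun t u => f (χt t) u, fun _ _ => rfl,
      hf.continuous.comp ((hχtc.comp continuous_fst).prodMk continuous_snd)⟩
  obtain ⟨A, hAeq, hAc⟩ : ∃ A : ℝ → En m → En n,
      (∀ t u, A t u =
        (ContinuousLinearMap.adjoint (fderiv ℝ (fun y => f y u) (χt t))) (pt t)) ∧
      Continuous fun q : ℝ × En m => A q.1 q.2 := by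
    refine ⟨fun t u =>
      (ContinuousLinearMap.adjoint (fderiv ℝ (fun y => f y u) (χt t))) (pt t),
      fun _ _ => rfl, ?_⟩
    have h1 := adjoint_cont f hf
    exact ((h1.comp ((hχtc.comp continuous_fst).prodMk continuous_snd)).clm_apply
      (hptc.comp continuous_fst))
  -- the full penalty function
  obtain ⟨Φf, hΦfeq, hΦfm, hΦfc, hΦf0⟩ : ∃ Φf : ℝ → En m → ℝ,
      (∀ t u, Φf t u = |G t u - M t| + ‖B t u - (ψ t).1‖ + ‖A t u + (ψ t).2‖) ∧
      (∀ w, Measurable fun t => Φf t w) ∧ (∀ t, Continuous fun u => Φf t u) ∧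
      ∀ t u, 0 ≤ Φf t u := by
    refine ⟨fun t u => |G t u - M t| + ‖B t u - (ψ t).1‖ + ‖A t u + (ψ t).2‖,
      fun _ _ => rfl, ?_, ?_, ?_⟩
    · intro w
      have m1 : Measurable fun t => G t w :=
        (hGc.comp (continuous_id.prodMk continuous_const)).measurable
      have m2 : Measurable fun t => B t w :=
        (hBc.comp (continuous_id.prodMk continuous_const)).measurable
      have m3 : Measurable fun t => A t w :=
        (hAc.comp (continuous_id.prodMk continuous_const)).measurable
      exact (((m1.sub hMmeas).abs).add
        ((m2.sub (measurable_fst.comp hψmeas)).norm)).add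
        ((m3.add (measurable_snd.comp hψmeas)).norm)
    · intro t
      have c1 : Continuous fun u => G t u := hGc.comp (continuous_const.prodMk continuous_id)
      have c2 : Continuous fun u => B t u := hBc.comp (continuous_const.prodMk continuous_id)
      have c3 : Continuous fun u => A t u := hAc.comp (continuous_const.prodMk continuous_id)
      exact (((c1.sub continuous_const).abs).add ((c2.sub continuous_const).norm)).add
        ((c3.add continuous_const).norm)
    · intro t u
      positivity
  have hΦf_iff : ∀ t u, Φf t u = 0 ↔
      (G t u = M t ∧ B t u = (ψ t).1 ∧ A t u = -(ψ t).2) := by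
    intro t u
    rw [hΦfeq]
    constructor
    · intro h
      have n1 := abs_nonneg (G t u - M t)
      have n2 := norm_nonneg (B t u - (ψ t).1)
      have n3 := norm_nonneg (A t u + (ψ t).2)
      refine ⟨sub_eq_zero.mp (abs_eq_zero.mp (by linarith)),
        sub_eq_zero.mp (norm_eq_zero.mp (by linarith)), ?_⟩
      have h3 : A t u + (ψ t).2 = 0 := norm_eq_zero.mp (by linarith)
      exact eq_neg_of_add_eq_zero_left h3
    · rintro ⟨h1, h2, h3⟩
      rw [h1, h2, h3]
      simp
  -- the set of times where the full penalty can vanish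
  obtain ⟨Tset, hTdef⟩ : ∃ T : Set ℝ, T = {t | ∃ u ∈ Ω, Φf t u = 0} := ⟨_, rfl⟩
  have hTm : MeasurableSet Tset := by
    rw [hTdef]
    exact measurableSet_sel_dom hΩ hΩne hΦfm hΦfc hΦf0
  -- the combined penalty function
  obtain ⟨Φ', hΦ'pos, hΦ'neg, hΦ'm, hΦ'c, hΦ'0⟩ : ∃ Φ' : ℝ → En m → ℝ,
      (∀ t ∈ Tset, ∀ u, Φ' t u = Φf t u) ∧
      (∀ t ∉ Tset, ∀ u, Φ' t u = |G t u - M t|) ∧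
      (∀ w, Measurable fun t => Φ' t w) ∧ (∀ t, Continuous fun u => Φ' t u) ∧
      ∀ t u, 0 ≤ Φ' t u := by
    refine ⟨fun t u => if t ∈ Tset then Φf t u else |G t u - M t|,
      fun t ht u => if_pos ht, fun t ht u => if_neg ht, ?_, ?_, ?_⟩
    · intro w
      exact Measurable.ite hTm (hΦfm w)
        (((hGc.comp (continuous_id.prodMk continuous_const)).measurable.sub hMmeas).abs)
    · intro t
      by_cases h : t ∈ Tset
      · simp only [if_pos h]; exact hΦfc t
      · simp only [if_neg h]
        exact ((hGc.comp (continuous_const.prodMk continuous_id)).sub continuous_const).abs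
    · intro t u
      by_cases h : t ∈ Tset
      · simp only [if_pos h]; exact hΦf0 t u
      · simp only [if_neg h]; exact abs_nonneg _
  have hS' : ∀ t, ∃ u ∈ Ω, Φ' t u = 0 := by
    intro t
    by_cases h : t ∈ Tset
    · have h' := h
      rw [hTdef] at h'
      obtain ⟨u, hu, h0⟩ := h'
      exact ⟨u, hu, (hΦ'pos t h u).trans h0⟩
    · obtain ⟨u, hu, hGu⟩ := hMatt t
      exact ⟨u, hu, by rw [hΦ'neg t h u, hGu, sub_self, abs_zero]⟩
  obtain ⟨u, hum, hu⟩ := exists_measurable_selection hΩ hΦ'm hΦ'c hΦ'0 hS'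
  -- the selected control maximizes the Hamiltonian everywhere
  have humax : ∀ t, u t ∈ Ω ∧ G t (u t) = M t := by
    intro t
    refine ⟨(hu t).1, ?_⟩
    by_cases h : t ∈ Tset
    · have h2 := (hu t).2
      rw [hΦ'pos t h] at h2
      exact ((hΦf_iff t (u t)).mp h2).1
    · have h2 := (hu t).2
      rw [hΦ'neg t h] at h2
      exact sub_eq_zero.mp (abs_eq_zero.mp h2)
  have hGIcc : ∀ t ∈ Set.Icc 0 tf, ∀ w : En m, G t w = inner ℝ (p t) (f (χ t) w) := by
    intro t ht w
    rw [hGeq, hχteq, hpteq, hπid t ht]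
  have hUmax : ∀ t ∈ Set.Icc 0 tf, u t ∈ Umax Ω f (χ t) (p t) := by
    intro t ht
    refine ⟨(humax t).1, fun ω hω => ?_⟩
    rw [← hGIcc t ht ω, ← hGIcc t ht (u t), (humax t).2]
    exact hMub t ω hω
  -- the key a.e. identities
  have hkey : ∀ᵐ s ∂(volume.restrict (Set.Icc 0 tf)),
      f (χ s) (u s) = (φ s).1 ∧
      (ContinuousLinearMap.adjoint (fderiv ℝ (fun x => f x (u s)) (χ s))) (p s) = -(φ s).2 := by
    filter_upwards [hmem, hψφ, ae_restrict_mem measurableSet_Icc] with s hs hψs hsIcc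
    obtain ⟨w, hwU, hwφ⟩ := hs
    have hBs : ∀ v : En m, B s v = f (χ s) v := by
      intro v; rw [hBeq, hχteq, hπid s hsIcc]
    have hAs : ∀ v : En m, A s v =
        (ContinuousLinearMap.adjoint (fderiv ℝ (fun y => f y v) (χ s))) (p s) := by
      intro v; rw [hAeq, hχteq, hpteq, hπid s hsIcc]
    have hGw : G s w = M s := by
      refine le_antisymm (hMub s w hwU.1) ?_
      obtain ⟨v, hvΩ, hveq⟩ := hMatt s
      rw [← hveq, hGIcc s hsIcc v, hGIcc s hsIcc w]
      exact hwU.2 v hvΩ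
    have hsT : s ∈ Tset := by
      rw [hTdef]
      refine ⟨w, hwU.1, (hΦf_iff s w).mpr ⟨hGw, ?_, ?_⟩⟩
      · rw [hBs w, hψs, hwφ]
      · rw [hAs w, hψs, hwφ]; simp
    have h0 := (hu s).2
    rw [hΦ'pos s hsT] at h0
    obtain ⟨-, h2, h3⟩ := (hΦf_iff s (u s)).mp h0
    constructor
    · rw [← hBs (u s), h2, hψs]
    · rw [← hAs (u s), h3, hψs]
  -- integrability on subintervals
  have hIcc_int : ∀ t ∈ Set.Icc 0 tf, IntervalIntegrable φ volume 0 t := by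
    intro t ht
    rw [intervalIntegrable_iff]
    apply hφint.mono_set
    rw [Set.uIoc_of_le ht.1]
    exact Set.Ioc_subset_Icc_self.trans (Set.Icc_subset_Icc le_rfl ht.2)
  have hkey' := (ae_restrict_iff' measurableSet_Icc).1 hkey
  -- the response identity
  have hresp : ∀ t ∈ Set.Icc 0 tf, χ t = χ 0 + ∫ s in (0:ℝ)..t, f (χ s) (u s) := by
    intro t ht
    have h1 := heq t ht
    have h2 : χ t = χ 0 + (∫ s in (0:ℝ)..t, φ s).1 := by
      have := congrArg Prod.fst h1
      simpa using this
    have h3 : (∫ s in (0:ℝ)..t, φ s).1 = ∫ s in (0:ℝ)..t, (φ s).1 :=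
      ((ContinuousLinearMap.fst ℝ (En n) (En n)).intervalIntegral_comp_comm
        (hIcc_int t ht)).symm
    rw [h2, h3]
    congr 1
    apply intervalIntegral.integral_congr_ae
    filter_upwards [hkey'] with s hs hsι
    have hsIcc : s ∈ Set.Icc 0 tf := by
      rw [Set.uIoc_of_le ht.1] at hsι
      exact ⟨hsι.1.le, hsι.2.trans ht.2⟩
    exact ((hs hsIcc).1).symm
  -- the adjoint identity
  have hadj : ∀ t ∈ Set.Icc 0 tf, p t = p 0 - ∫ s in (0:ℝ)..t,
      (ContinuousLinearMap.adjoint (fderiv ℝ (fun x => f x (u s)) (χ s))) (p s) := by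
    intro t ht
    have h1 := heq t ht
    have h2 : p t = p 0 + (∫ s in (0:ℝ)..t, φ s).2 := by
      have := congrArg Prod.snd h1
      simpa using this
    have h3 : (∫ s in (0:ℝ)..t, φ s).2 = ∫ s in (0:ℝ)..t, (φ s).2 :=
      ((ContinuousLinearMap.snd ℝ (En n) (En n)).intervalIntegral_comp_comm
        (hIcc_int t ht)).symm
    have h4 : (∫ s in (0:ℝ)..t, (φ s).2) = ∫ s in (0:ℝ)..t,
        -((ContinuousLinearMap.adjoint (fderiv ℝ (fun x => f x (u s)) (χ s))) (p s)) := by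
      apply intervalIntegral.integral_congr_ae
      filter_upwards [hkey'] with s hs hsι
      have hsIcc : s ∈ Set.Icc 0 tf := by
        rw [Set.uIoc_of_le ht.1] at hsι
        exact ⟨hsι.1.le, hsι.2.trans ht.2⟩
      rw [(hs hsIcc).2]; simp
    rw [h2, h3, h4, intervalIntegral.integral_neg, ← sub_eq_add_neg]
  -- the Hamiltonian maximality a.e.
  have hham : ∀ᵐ t ∂(volume.restrict (Set.Icc 0 tf)),
      ∀ ω ∈ Ω, (inner ℝ (p t) (f (χ t) ω) : ℝ) ≤ inner ℝ (p t) (f (χ t) (u t)) := by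
    refine ae_restrict_of_forall_mem measurableSet_Icc (fun t ht => ?_)
    exact fun ω hω => (hUmax t ht).2 ω hω
  exact ⟨u, hum, hUmax, ⟨hum, fun t ht => (hUmax t ht).1⟩, ⟨hχ, hresp⟩, hp, hp0, hadj, hham⟩
end
end

section
/- For t ≥ 0, let A(t) ⊆ ℝ³ be the set of endpoints χ(t) over all Dubins trajectories χ on [0,t] from χ_{2D,i} of class CSC or CCC (with possibly degenerate subintervals). Then A(t) is nonempty and compact for every t ≥ 0, and for every T > 0 the map t ↦ A(t) is continuous on [0,T] with respect to the Hausdorff distance. -/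
open MeasureTheory Metric Set

noncomputable section

/-- Right-hand side of the Dubins car dynamics on state `(x, y, γ)`:
`ẋ = cos γ, ẏ = sin γ, γ̇ = u`. -/
def dubinsRHS (q : ℝ × ℝ × ℝ) (w : ℝ) : ℝ × ℝ × ℝ :=
  (Real.cos q.2.2, Real.sin q.2.2, w)

/-- A Dubins trajectory on `[a, b]` from `x₀`: an (absolutely continuous, in integral
form) solution of the Dubins car equations for a measurable control with values in
`[-1, 1]`. -/
def IsDubinsTraj (a b : ℝ) (x₀ : ℝ × ℝ × ℝ) (χ : ℝ → ℝ × ℝ × ℝ) (u : ℝ → ℝ) : Prop :=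
  Measurable u ∧ (∀ t ∈ Set.Icc a b, u t ∈ Set.Icc (-1 : ℝ) 1) ∧
  ContinuousOn χ (Set.Icc a b) ∧
  ∀ t ∈ Set.Icc a b, χ t = x₀ + ∫ s in a..t, dubinsRHS (χ s) (u s)

/-- The control on `[a, b]` is of class CSC: bang (`±1`), then straight (`0`), then
bang (`±1`), with possibly degenerate subintervals. -/
def IsCSCControl (a b : ℝ) (u : ℝ → ℝ) : Prop :=
  ∃ t₁ t₂, a ≤ t₁ ∧ t₁ ≤ t₂ ∧ t₂ ≤ b ∧
    ∃ c ∈ ({-1, 1} : Set ℝ), ∃ d ∈ ({-1, 1} : Set ℝ),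
      (∀ t ∈ Set.Ioo a t₁, u t = c) ∧ (∀ t ∈ Set.Ioo t₁ t₂, u t = 0) ∧
      (∀ t ∈ Set.Ioo t₂ b, u t = d)

/-- The control on `[a, b]` is of class CCC: bang `c`, then `-c`, then `c`,
with `c = ±1` and possibly degenerate subintervals. -/
def IsCCCControl (a b : ℝ) (u : ℝ → ℝ) : Prop :=
  ∃ t₁ t₂, a ≤ t₁ ∧ t₁ ≤ t₂ ∧ t₂ ≤ b ∧
    ∃ c ∈ ({-1, 1} : Set ℝ),
      (∀ t ∈ Set.Ioo a t₁, u t = c) ∧ (∀ t ∈ Set.Ioo t₁ t₂, u t = -c) ∧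
      (∀ t ∈ Set.Ioo t₂ b, u t = c)

/-- The Dubins reachable set `G(f_{2D}, t, χ_{2D,i})` from the origin. -/
def DubinsReach (t : ℝ) : Set (ℝ × ℝ × ℝ) :=
  {y | ∃ χ u, IsDubinsTraj 0 t (0, 0, 0) χ u ∧ χ t = y}

/-- The set `A(t)` of endpoints of Dubins trajectories of class CSC or CCC of
length `t` from the origin. -/
def DubinsA (t : ℝ) : Set (ℝ × ℝ × ℝ) :=
  {y | ∃ χ u, IsDubinsTraj 0 t (0, 0, 0) χ u ∧
    (IsCSCControl 0 t u ∨ IsCCCControl 0 t u) ∧ χ t = y}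

/-!
The heading of a control that takes the constant values `c` on the three arcs cut out by the
switching times `t₁ ≤ t₂` is an explicit piecewise-affine function of `(t₁, t₂, c, s)`, and the
position is obtained from the heading by integrating `(cos, sin)`. Hence `A(t)` is the continuous
image of the compact set of admissible switching times times the finitely many CSC/CCC sign
patterns. Every trajectory is `1`-Lipschitz in time for the sup-norm, and clamping the switching
times at `t` does not change the trajectory on `[0, t]`; so every point of `A(s)` lies within
`|s - t|` of a point of `A(t)`, that is `d_H(A(s), A(t)) ≤ |s - t|`.
-/

lemma IntervalIntegrable.prodMk {E F : Type*} [NormedAddCommGroup E] [NormedAddCommGroup F]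
    {f : ℝ → E} {g : ℝ → F} {a b : ℝ} (hf : IntervalIntegrable f volume a b)
    (hg : IntervalIntegrable g volume a b) :
    IntervalIntegrable (fun x => (f x, g x)) volume a b :=
  ⟨hf.1.prodMk hg.1, hf.2.prodMk hg.2⟩

lemma intervalIntegral.integral_pair {E F : Type*} [NormedAddCommGroup E] [NormedSpace ℝ E]
    [CompleteSpace E] [NormedAddCommGroup F] [NormedSpace ℝ F] [CompleteSpace F]
    {f : ℝ → E} {g : ℝ → F} {a b : ℝ} (hf : IntervalIntegrable f volume a b)
    (hg : IntervalIntegrable g volume a b) :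
    ∫ x in a..b, (f x, g x) = (∫ x in a..b, f x, ∫ x in a..b, g x) := by
  simp only [intervalIntegral, _root_.integral_pair hf.1 hg.1,
    _root_.integral_pair hf.2 hg.2, Prod.mk_sub_mk]

lemma intervalIntegrable_of_abs_le_one {f : ℝ → ℝ} (hf : Measurable f) (hb : ∀ r, |f r| ≤ 1)
    (a b : ℝ) : IntervalIntegrable f volume a b :=
  intervalIntegrable_const.mono_fun' hf.aestronglyMeasurable (ae_of_all _ hb)

lemma abs_integral_sub_integral_le {f : ℝ → ℝ} (hf : Measurable f) (hb : ∀ r, |f r| ≤ 1)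
    (a s t : ℝ) : |(∫ r in a..s, f r) - ∫ r in a..t, f r| ≤ |s - t| := by
  rw [intervalIntegral.integral_interval_sub_left (intervalIntegrable_of_abs_le_one hf hb _ _)
    (intervalIntegrable_of_abs_le_one hf hb _ _)]
  simpa using intervalIntegral.norm_integral_le_of_norm_le_const (a := t) (b := s) (C := 1)
    fun r _ => (Real.norm_eq_abs _).trans_le (hb r)

lemma intervalIntegrable_of_eqOn_Ioo {u : ℝ → ℝ} {a b c : ℝ} (hab : a ≤ b)
    (hu : ∀ r ∈ Ioo a b, u r = c) : IntervalIntegrable u volume a b := by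
  rw [intervalIntegrable_iff_integrableOn_Ioc_of_le hab, integrableOn_Ioc_iff_integrableOn_Ioo]
  exact (integrableOn_const (by simp)).congr_fun (fun r hr => (hu r hr).symm) measurableSet_Ioo

lemma integral_eq_of_eqOn_Ioo {u : ℝ → ℝ} {a b c : ℝ} (hab : a ≤ b)
    (hu : ∀ r ∈ Ioo a b, u r = c) : ∫ r in a..b, u r = c * (b - a) := by
  rw [intervalIntegral.integral_of_le hab, integral_Ioc_eq_integral_Ioo,
    setIntegral_congr_fun measurableSet_Ioo hu]
  simp [hab, mul_comm]

def dubinsCurve (γ : ℝ → ℝ) (s : ℝ) : ℝ × ℝ × ℝ :=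
  (∫ r in (0 : ℝ)..s, Real.cos (γ r), ∫ r in (0 : ℝ)..s, Real.sin (γ r), γ s)

lemma dubinsCurve_congr {γ γ' : ℝ → ℝ} {t : ℝ} (h : EqOn γ γ' (uIcc 0 t)) :
    dubinsCurve γ t = dubinsCurve γ' t := by
  simp only [dubinsCurve, intervalIntegral.integral_congr (fun r hr => congrArg Real.cos (h hr)),
    intervalIntegral.integral_congr (fun r hr => congrArg Real.sin (h hr)), h right_mem_uIcc]

lemma dist_dubinsCurve_le {γ : ℝ → ℝ} (hγ : Continuous γ) {s t : ℝ}
    (hst : |γ s - γ t| ≤ |s - t|) : dist (dubinsCurve γ s) (dubinsCurve γ t) ≤ |s - t| := by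
  simp only [dubinsCurve, Prod.dist_eq, Real.dist_eq]
  exact max_le
    (abs_integral_sub_integral_le (Real.continuous_cos.comp hγ).measurable
      (fun _ => Real.abs_cos_le_one _) 0 s t)
    (max_le (abs_integral_sub_integral_le (Real.continuous_sin.comp hγ).measurable
      (fun _ => Real.abs_sin_le_one _) 0 s t) hst)

lemma continuous_dubinsCurve_apply {X : Type*} [TopologicalSpace X] {γ : X → ℝ → ℝ}
    (hγ : Continuous (Function.uncurry γ)) (t : ℝ) :
    Continuous fun x => dubinsCurve (γ x) t := by
  have hγt : Continuous fun x => γ x t := hγ.comp (continuous_id.prodMk continuous_const)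
  exact (intervalIntegral.continuous_parametric_intervalIntegral_of_continuous'
      (f := fun x r => Real.cos (γ x r)) (Real.continuous_cos.comp hγ) 0 t).prodMk
    ((intervalIntegral.continuous_parametric_intervalIntegral_of_continuous'
      (f := fun x r => Real.sin (γ x r)) (Real.continuous_sin.comp hγ) 0 t).prodMk hγt)

lemma IsDubinsTraj.eq_add_integrals {a b : ℝ} {x₀ : ℝ × ℝ × ℝ} {χ : ℝ → ℝ × ℝ × ℝ}
    {u : ℝ → ℝ} (hχ : IsDubinsTraj a b x₀ χ u) {s : ℝ} (hs : s ∈ Icc a b) :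
    χ s = x₀ + (∫ r in a..s, Real.cos (χ r).2.2, ∫ r in a..s, Real.sin (χ r).2.2,
      ∫ r in a..s, u r) := by
  obtain ⟨hu, hub, hχc, hχ⟩ := hχ
  have hsub : uIcc a s ⊆ Icc a b := by
    rw [uIcc_of_le hs.1]; exact Icc_subset_Icc_right hs.2
  have hγ : ContinuousOn (fun r => (χ r).2.2) (uIcc a s) := hχc.snd.snd.mono hsub
  have hcos := (Real.continuous_cos.comp_continuousOn hγ).intervalIntegrable (μ := volume)
  have hsin := (Real.continuous_sin.comp_continuousOn hγ).intervalIntegrable (μ := volume)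
  have hu' : IntervalIntegrable u volume a s :=
    (((Measure.integrableOn_of_bounded (M := 1) measure_Icc_lt_top.ne hu.aestronglyMeasurable
      ((ae_restrict_iff' measurableSet_Icc).2 (ae_of_all _ fun r hr => abs_le.2 (hub r hr))))
      ).mono_set hsub).intervalIntegrable
  rw [hχ s hs]
  exact congrArg _ ((intervalIntegral.integral_pair hcos (hsin.prodMk hu')).trans
    (congrArg _ (intervalIntegral.integral_pair hsin hu')))

lemma IsDubinsTraj.eq_dubinsCurve {t : ℝ} {χ : ℝ → ℝ × ℝ × ℝ} {u γ : ℝ → ℝ}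
    (hχ : IsDubinsTraj 0 t (0, 0, 0) χ u) (hγ : ∀ s ∈ Icc 0 t, ∫ r in (0 : ℝ)..s, u r = γ s)
    (ht : 0 ≤ t) : χ t = dubinsCurve γ t := by
  have heading : ∀ s ∈ Icc 0 t, (χ s).2.2 = γ s := fun s hs => by
    simp only [hχ.eq_add_integrals hs, ← hγ s hs, Prod.mk_add_mk, zero_add]
  have heading' : EqOn (fun r => (χ r).2.2) γ (uIcc 0 t) := by
    rw [uIcc_of_le ht]; exact heading
  simp only [hχ.eq_add_integrals ⟨ht, le_rfl⟩, Prod.mk_add_mk, zero_add, hγ t ⟨ht, le_rfl⟩]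
  exact congrArg₂ Prod.mk
      (intervalIntegral.integral_congr fun r hr => congrArg Real.cos (heading' hr))
      (congrArg₂ Prod.mk
        (intervalIntegral.integral_congr fun r hr => congrArg Real.sin (heading' hr)) rfl)

lemma isDubinsTraj_dubinsCurve {t : ℝ} {u γ : ℝ → ℝ} (hu : Measurable u)
    (hub : ∀ r, |u r| ≤ 1) (hγ : Continuous γ)
    (hγu : ∀ s ∈ Icc 0 t, ∫ r in (0 : ℝ)..s, u r = γ s) :
    IsDubinsTraj 0 t (0, 0, 0) (dubinsCurve γ) u := by
  have hcos : ∀ a b, IntervalIntegrable (fun r => Real.cos (γ r)) volume a b :=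
    (Real.continuous_cos.comp hγ).intervalIntegrable
  have hsin : ∀ a b, IntervalIntegrable (fun r => Real.sin (γ r)) volume a b :=
    (Real.continuous_sin.comp hγ).intervalIntegrable
  refine ⟨hu, fun r _ => abs_le.1 (hub r), ?_, fun s hs => ?_⟩
  · exact ((intervalIntegral.continuous_primitive hcos 0).prodMk
      ((intervalIntegral.continuous_primitive hsin 0).prodMk hγ)).continuousOn
  · have hu' := intervalIntegrable_of_abs_le_one hu hub 0 s
    simp only [dubinsRHS, dubinsCurve, Prod.mk_add_mk, zero_add,
      intervalIntegral.integral_pair (hcos 0 s) ((hsin 0 s).prodMk hu'),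
      intervalIntegral.integral_pair (hsin 0 s) hu', hγu s hs]

def switchTimes (t : ℝ) : Set (ℝ × ℝ) := {p | 0 ≤ p.1 ∧ p.1 ≤ p.2 ∧ p.2 ≤ t}

def switchPatterns : Set (ℝ × ℝ × ℝ) :=
  {c | c.1 ∈ ({-1, 1} : Set ℝ) ∧
    (c.2.1 = 0 ∧ c.2.2 ∈ ({-1, 1} : Set ℝ) ∨ c.2.1 = -c.1 ∧ c.2.2 = c.1)}

def IsThreePieceControl (p : ℝ × ℝ) (t : ℝ) (c : ℝ × ℝ × ℝ) (u : ℝ → ℝ) : Prop :=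
  (∀ r ∈ Ioo 0 p.1, u r = c.1) ∧ (∀ r ∈ Ioo p.1 p.2, u r = c.2.1) ∧
    ∀ r ∈ Ioo p.2 t, u r = c.2.2

lemma isCSCControl_or_isCCCControl_iff {t : ℝ} {u : ℝ → ℝ} :
    IsCSCControl 0 t u ∨ IsCCCControl 0 t u ↔
      ∃ p ∈ switchTimes t, ∃ c ∈ switchPatterns, IsThreePieceControl p t c u := by
  constructor
  · rintro (⟨t₁, t₂, h₁, h₁₂, h₂, c, hc, d, hd, hu⟩ | ⟨t₁, t₂, h₁, h₁₂, h₂, c, hc, hu⟩)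
    · exact ⟨(t₁, t₂), ⟨h₁, h₁₂, h₂⟩, (c, 0, d), ⟨hc, .inl ⟨rfl, hd⟩⟩, hu⟩
    · exact ⟨(t₁, t₂), ⟨h₁, h₁₂, h₂⟩, (c, -c, c), ⟨hc, .inr ⟨rfl, rfl⟩⟩, hu⟩
  · rintro ⟨⟨t₁, t₂⟩, ⟨h₁, h₁₂, h₂⟩, ⟨c, b, d⟩, ⟨hc, ⟨rfl, hd⟩ | ⟨hb, hd⟩⟩, hu⟩
    · exact .inl ⟨t₁, t₂, h₁, h₁₂, h₂, c, hc, d, hd, hu⟩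
    · obtain rfl : b = -c := hb
      obtain rfl : d = c := hd
      exact .inr ⟨t₁, t₂, h₁, h₁₂, h₂, d, hc, hu⟩

lemma switchPatterns_subset :
    switchPatterns ⊆ ({-1, 1} : Set ℝ) ×ˢ ({-1, 0, 1} : Set ℝ) ×ˢ ({-1, 1} : Set ℝ) := by
  rintro ⟨c, b, d⟩ ⟨hc, ⟨rfl, hd⟩ | ⟨hb, hd⟩⟩
  · exact ⟨hc, by simp, hd⟩
  · obtain rfl : b = -c := hb
    obtain rfl : d = c := hd
    rcases hc with rfl | rfl <;> simp

lemma switchPatterns_finite : switchPatterns.Finite :=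
  (Set.toFinite _).subset switchPatterns_subset

lemma isCompact_switchTimes (t : ℝ) : IsCompact (switchTimes t) := by
  have hIcc : IsCompact (Icc (0 : ℝ) t) := isCompact_Icc
  refine (hIcc.prod hIcc).of_isClosed_subset ((isClosed_le continuous_const continuous_fst).inter
      ((isClosed_le continuous_fst continuous_snd).inter
        (isClosed_le continuous_snd continuous_const))) ?_
  rintro p ⟨h₁, h₁₂, h₂⟩
  exact ⟨⟨h₁, h₁₂.trans h₂⟩, ⟨h₁.trans h₁₂, h₂⟩⟩

lemma min_mem_switchTimes {p : ℝ × ℝ} {s t : ℝ} (hp : p ∈ switchTimes s) (ht : 0 ≤ t) :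
    (min p.1 t, min p.2 t) ∈ switchTimes t :=
  ⟨le_min hp.1 ht, min_le_min_right t hp.2.1, min_le_right _ _⟩

def pieceCtrl (p : ℝ × ℝ) (c : ℝ × ℝ × ℝ) (r : ℝ) : ℝ :=
  if r < p.1 then c.1 else if r < p.2 then c.2.1 else c.2.2

def pieceAngle (p : ℝ × ℝ) (c : ℝ × ℝ × ℝ) (s : ℝ) : ℝ :=
  c.1 * min s p.1 + c.2.1 * (min s p.2 - min s p.1) + c.2.2 * (s - min s p.2)

lemma isThreePieceControl_pieceCtrl {p : ℝ × ℝ} (hp : p.1 ≤ p.2) (t : ℝ) (c : ℝ × ℝ × ℝ) :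
    IsThreePieceControl p t c (pieceCtrl p c) := by
  refine ⟨fun r hr => if_pos hr.2, fun r hr => ?_, fun r hr => ?_⟩
  · rw [pieceCtrl, if_neg hr.1.not_gt, if_pos hr.2]
  · rw [pieceCtrl, if_neg (hp.trans_lt hr.1).not_gt, if_neg hr.1.not_gt]

lemma measurable_pieceCtrl (p : ℝ × ℝ) (c : ℝ × ℝ × ℝ) : Measurable (pieceCtrl p c) :=
  Measurable.ite measurableSet_Iio measurable_const <|
    Measurable.ite measurableSet_Iio measurable_const measurable_const

lemma abs_pieceCtrl_le_one {c : ℝ × ℝ × ℝ} (hc : c ∈ switchPatterns) (p : ℝ × ℝ) (r : ℝ) :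
    |pieceCtrl p c r| ≤ 1 := by
  have h : ∀ x ∈ ({-1, 0, 1} : Set ℝ), |x| ≤ 1 := by rintro x (rfl | rfl | rfl) <;> norm_num
  obtain ⟨h₁, h₂, h₃⟩ := switchPatterns_subset hc
  unfold pieceCtrl
  split_ifs
  exacts [h _ (Or.imp_right Or.inr h₁), h _ h₂, h _ (Or.imp_right Or.inr h₃)]

lemma continuous_pieceAngle (p : ℝ × ℝ) (c : ℝ × ℝ × ℝ) : Continuous (pieceAngle p c) := by
  unfold pieceAngle; fun_prop

lemma continuous_uncurry_pieceAngle :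
    Continuous (Function.uncurry fun q : (ℝ × ℝ) × (ℝ × ℝ × ℝ) => pieceAngle q.1 q.2) := by
  unfold Function.uncurry pieceAngle; fun_prop

lemma pieceAngle_min_of_le {p : ℝ × ℝ} {c : ℝ × ℝ × ℝ} {r t : ℝ} (hr : r ≤ t) :
    pieceAngle (min p.1 t, min p.2 t) c r = pieceAngle p c r := by
  simp only [pieceAngle, ← min_assoc, min_eq_left ((min_le_left r _).trans hr)]

lemma IsThreePieceControl.integral_eq_pieceAngle {p : ℝ × ℝ} {t : ℝ} {c : ℝ × ℝ × ℝ}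
    {u : ℝ → ℝ} (hu : IsThreePieceControl p t c u) (hp : p ∈ switchTimes t) {s : ℝ}
    (hs : s ∈ Icc 0 t) : ∫ r in (0 : ℝ)..s, u r = pieceAngle p c s := by
  obtain ⟨hu₁, hu₂, hu₃⟩ := hu
  have h₁ : ∀ r ∈ Ioo 0 (min s p.1), u r = c.1 := fun r hr =>
    hu₁ r ⟨hr.1, hr.2.trans_le (min_le_right _ _)⟩
  have h₂ : ∀ r ∈ Ioo (min s p.1) (min s p.2), u r = c.2.1 := fun r hr =>
    hu₂ r ⟨(min_lt_iff.1 hr.1).resolve_left (hr.2.trans_le (min_le_left _ _)).not_gt,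
      (lt_min_iff.1 hr.2).2⟩
  have h₃ : ∀ r ∈ Ioo (min s p.2) s, u r = c.2.2 := fun r hr =>
    hu₃ r ⟨(min_lt_iff.1 hr.1).resolve_left hr.2.not_gt, hr.2.trans_le hs.2⟩
  have le₀₁ : 0 ≤ min s p.1 := le_min hs.1 hp.1
  have le₁₂ : min s p.1 ≤ min s p.2 := min_le_min_left s hp.2.1
  have le₂ : min s p.2 ≤ s := min_le_left _ _
  have i₁ := intervalIntegrable_of_eqOn_Ioo le₀₁ h₁
  have i₂ := intervalIntegrable_of_eqOn_Ioo le₁₂ h₂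
  rw [← intervalIntegral.integral_add_adjacent_intervals (i₁.trans i₂)
      (intervalIntegrable_of_eqOn_Ioo le₂ h₃),
    ← intervalIntegral.integral_add_adjacent_intervals i₁ i₂, integral_eq_of_eqOn_Ioo le₀₁ h₁,
    integral_eq_of_eqOn_Ioo le₁₂ h₂, integral_eq_of_eqOn_Ioo le₂ h₃, pieceAngle]
  ring

lemma abs_pieceAngle_sub_le {p : ℝ × ℝ} {c : ℝ × ℝ × ℝ} (h₁ : 0 ≤ p.1) (h₁₂ : p.1 ≤ p.2)
    (hc : c ∈ switchPatterns) {s t : ℝ} (hs : 0 ≤ s) (ht : 0 ≤ t) :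
    |pieceAngle p c s - pieceAngle p c t| ≤ |s - t| := by
  set T := max (max s t) p.2
  have hu := isThreePieceControl_pieceCtrl h₁₂ T c
  have hp : p ∈ switchTimes T := ⟨h₁, h₁₂, le_max_right _ _⟩
  rw [← hu.integral_eq_pieceAngle hp ⟨hs, (le_max_left s t).trans (le_max_left _ _)⟩,
    ← hu.integral_eq_pieceAngle hp ⟨ht, (le_max_right s t).trans (le_max_left _ _)⟩]
  exact abs_integral_sub_integral_le (measurable_pieceCtrl p c) (abs_pieceCtrl_le_one hc p) 0 s t

lemma dubinsA_eq_image (t : ℝ) :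
    DubinsA t = (fun q : (ℝ × ℝ) × (ℝ × ℝ × ℝ) => dubinsCurve (pieceAngle q.1 q.2) t) ''
      (switchTimes t ×ˢ switchPatterns) := by
  ext y
  constructor
  · rintro ⟨χ, u, hχ, hu, rfl⟩
    obtain ⟨p, hp, c, hc, hu⟩ := isCSCControl_or_isCCCControl_iff.1 hu
    exact ⟨(p, c), ⟨hp, hc⟩, (hχ.eq_dubinsCurve (fun s hs => hu.integral_eq_pieceAngle hp hs)
      (hp.1.trans (hp.2.1.trans hp.2.2))).symm⟩
  · rintro ⟨⟨p, c⟩, ⟨hp, hc⟩, rfl⟩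
    have hu := isThreePieceControl_pieceCtrl hp.2.1 t c
    exact ⟨dubinsCurve (pieceAngle p c), pieceCtrl p c,
      isDubinsTraj_dubinsCurve (measurable_pieceCtrl p c) (abs_pieceCtrl_le_one hc p)
        (continuous_pieceAngle p c) (fun s hs => hu.integral_eq_pieceAngle hp hs),
      isCSCControl_or_isCCCControl_iff.2 ⟨p, hp, c, hc, hu⟩, rfl⟩

lemma exists_dist_le_of_mem_dubinsA {s t : ℝ} {x : ℝ × ℝ × ℝ} (hx : x ∈ DubinsA s)
    (ht : 0 ≤ t) : ∃ y ∈ DubinsA t, dist x y ≤ |s - t| := by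
  rw [dubinsA_eq_image] at hx
  obtain ⟨⟨p, c⟩, ⟨hp, hc⟩, rfl⟩ := hx
  refine ⟨_, by rw [dubinsA_eq_image]; exact ⟨((min p.1 t, min p.2 t), c),
    ⟨min_mem_switchTimes hp ht, hc⟩, rfl⟩, ?_⟩
  have hp₁ : 0 ≤ p.1 := hp.1
  change dist (dubinsCurve (pieceAngle p c) s)
    (dubinsCurve (pieceAngle (min p.1 t, min p.2 t) c) t) ≤ |s - t|
  rw [dubinsCurve_congr fun r hr => pieceAngle_min_of_le (by rw [uIcc_of_le ht] at hr; exact hr.2)]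
  exact dist_dubinsCurve_le (continuous_pieceAngle p c)
    (abs_pieceAngle_sub_le hp₁ hp.2.1 hc (hp₁.trans (hp.2.1.trans hp.2.2)) ht)

lemma hausdorffDist_dubinsA_le {s t : ℝ} (hs : 0 ≤ s) (ht : 0 ≤ t) :
    hausdorffDist (DubinsA s) (DubinsA t) ≤ |s - t| :=
  hausdorffDist_le_of_mem_dist (abs_nonneg _) (fun _ hx => exists_dist_le_of_mem_dubinsA hx ht)
    fun _ hy => by simpa only [dist_comm, abs_sub_comm] using exists_dist_le_of_mem_dubinsA hy hs

/-- `A(t)` is nonempty and compact for every `t ≥ 0`, and for each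
`T > 0` the map `t ↦ A(t)` is continuous on `[0,T]` with respect to the Hausdorff
distance. -/
theorem dubinsA_nonempty_compact_continuous :
    (∀ t : ℝ, 0 ≤ t → (DubinsA t).Nonempty ∧ IsCompact (DubinsA t)) ∧
    (∀ T : ℝ, 0 < T → ∀ t ∈ Set.Icc 0 T, ∀ ε > 0, ∃ δ > 0, ∀ s ∈ Set.Icc 0 T,
      |s - t| < δ → hausdorffDist (DubinsA s) (DubinsA t) < ε) := by
  refine ⟨fun t ht => ?_, fun T _ t ht ε hε => ⟨ε, hε, fun s hs hst =>
    (hausdorffDist_dubinsA_le hs.1 ht.1).trans_lt hst⟩⟩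
  rw [dubinsA_eq_image]
  have hpattern : ((1, 0, 1) : ℝ × ℝ × ℝ) ∈ switchPatterns := by simp [switchPatterns]
  have htimes : ((0, 0) : ℝ × ℝ) ∈ switchTimes t := ⟨le_rfl, le_rfl, ht⟩
  exact ⟨⟨_, mem_image_of_mem _ (mk_mem_prod htimes hpattern)⟩,
    ((isCompact_switchTimes t).prod switchPatterns_finite.isCompact).image
      (continuous_dubinsCurve_apply continuous_uncurry_pieceAngle t)⟩
end
end
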